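/- arXiv:2601.09154 — 7 statements merged into one kernel-verified Lean document; each statement's English description precedes it below -/
import Mathlib

section
/- Let a, b, c, z be complex numbers such that c is not zero or a negative integer, 2c is not zero or a negative integer, and |z| < 1. Define a sequence (u_n) by u_0 = 1, u_1 = 2ab/c, and for n ≥ 1, u_{n+1} = α_0(n) u_n + α_1(n) u_{n-1}, where α_0(n) = (2n³ + 3(a+b+c−1)n² + ((a+b)(4c−3)+4ab−c+1)n + 2ab(2c−1)) / ((n+1)(c+n)(2c+n−1)) and α_1(n) = −(2a+n−1)(2b+n−1)(a+b+n−1) / ((n+1)(c+n)(2c+n−1)). Then F(a,b;c;z)² = ∑_{n=0}^∞ u_n z^n. -/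
open scoped Nat

/-- The Gaussian hypergeometric function `F(a,b;c;z)`, defined as the sum of its
Maclaurin series `∑ (a)_k (b)_k / ((c)_k k!) z^k`. -/
noncomputable def hyperF (a b c z : ℂ) : ℂ :=
  ∑' k : ℕ, ((ascPochhammer ℂ k).eval a * (ascPochhammer ℂ k).eval b /
    ((ascPochhammer ℂ k).eval c * (k ! : ℂ))) * z ^ k

namespace SqHyp

open Filter Finset

/-- Maclaurin coefficient of the hypergeometric series. -/
noncomputable def f (a b c : ℂ) (k : ℕ) : ℂ :=
  (ascPochhammer ℂ k).eval a * (ascPochhammer ℂ k).eval b /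
    ((ascPochhammer ℂ k).eval c * (k ! : ℂ))

lemma poch_ne {c : ℂ} (hc : ∀ k : ℕ, c + (k : ℂ) ≠ 0) (k : ℕ) :
    (ascPochhammer ℂ k).eval c ≠ 0 := by
  induction k with
  | zero => simp
  | succ n ih => rw [ascPochhammer_succ_eval]; exact mul_ne_zero ih (hc n)

lemma f_zero (a b c : ℂ) : f a b c 0 = 1 := by simp [f]

lemma f_succ {c : ℂ} (hc : ∀ k : ℕ, c + (k : ℂ) ≠ 0) (a b : ℂ) (k : ℕ) :
    f a b c (k + 1) = f a b c k * ((a + k) * (b + k) / (((k : ℂ) + 1) * (c + k))) := by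
  have h1 : (ascPochhammer ℂ k).eval c ≠ 0 := poch_ne hc k
  have h2 : ((k)! : ℂ) ≠ 0 := by exact_mod_cast (Nat.factorial_ne_zero k)
  have h3 : ((k : ℂ) + 1) ≠ 0 := by
    have : (((k + 1 : ℕ)) : ℂ) ≠ 0 := Nat.cast_ne_zero.mpr (Nat.succ_ne_zero k)
    simpa using this
  simp only [f, ascPochhammer_succ_eval, Nat.factorial_succ, Nat.cast_mul, Nat.cast_add,
    Nat.cast_one]
  field_simp

lemma f_one {c : ℂ} (hc : ∀ k : ℕ, c + (k : ℂ) ≠ 0) (a b : ℂ) :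
    f a b c 1 = a * b / c := by
  have h := f_succ hc a b 0
  simpa [f_zero] using h

lemma f_rec {c : ℂ} (hc : ∀ k : ℕ, c + (k : ℂ) ≠ 0) (a b : ℂ) (k : ℕ) :
    ((k : ℂ) + 1) * (c + k) * f a b c (k + 1) = (a + k) * (b + k) * f a b c k := by
  have h3 : ((k : ℂ) + 1) ≠ 0 := by
    have : (((k + 1 : ℕ)) : ℂ) ≠ 0 := Nat.cast_ne_zero.mpr (Nat.succ_ne_zero k)
    simpa using this
  rw [f_succ hc a b k]
  field_simp [hc k]

/-! ### The coefficients of the recurrence and the telescoping certificate -/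

noncomputable def Af (c nn : ℂ) : ℂ := (nn + 1) * (c + nn) * (2 * c + nn - 1)

noncomputable def Bf (a b c nn : ℂ) : ℂ :=
  2 * nn ^ 3 + 3 * (a + b + c - 1) * nn ^ 2
    + ((a + b) * (4 * c - 3) + 4 * a * b - c + 1) * nn + 2 * a * b * (2 * c - 1)

noncomputable def Cf (a b nn : ℂ) : ℂ :=
  (2 * a + nn - 1) * (2 * b + nn - 1) * (a + b + nn - 1)

/-- The Zeilberger certificate polynomial. -/
noncomputable def cp (a b c nn k : ℂ) : ℂ :=
  (c + nn + a*b - 2*a*c - a*nn - 2*b*c - b*nn - c^2 - 3*c*nn - nn^2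
    + a*b*c + 3*a*b*nn + 2*a*c^2 + a*c*nn + a*nn^2 + 2*b*c^2 + b*c*nn + b*nn^2 + 2*c^2*nn
    - 2*a*b*c^2 - 3*a*b*c*nn - a*c*nn^2 - b*c*nn^2 + c^2*nn^2)
  + (-1 + a + b + c - 3*a*b + a*c + b*c - c^2 + 2*c*nn + nn^2
    - 3*a*b*nn + a*c*nn - a*nn^2 + b*c*nn - b*nn^2 - c^2*nn + c*nn^2) * k
  + (1 - a - b - c - nn + 2*a*b + a*nn + b*nn - c*nn) * k^2

set_option maxHeartbeats 1000000 in
lemma step_id_mul (a b c K J f0 f1 g0 g1 g2 : ℂ)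
    (e1 : (J + 1) * (c + J) * g1 = (a + J) * (b + J) * g0)
    (e2 : (J + 2) * (c + (J + 1)) * g2 = (a + (J + 1)) * (b + (J + 1)) * g1)
    (e3 : (K + 1) * (c + K) * f1 = (a + K) * (b + K) * f0) :
    (c + K) * (((J + 1) * (c + J)) * (((J + 2) * (c + (J + 1))) *
        (Af c (K + J + 1) * (f0 * g2) - Bf a b c (K + J + 1) * (f0 * g1)
          + Cf a b (K + J + 1) * (f0 * g0))))
      = (c + K) * (((K + 1) * cp a b c (K + J + 1) (K + 1) * f1 * g0) * ((J + 2) * (c + (J + 1))))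
        - (c + K) * ((K * cp a b c (K + J + 1) K * f0 * g1) * ((J + 1) * (c + J))) := by
  simp only [Af, Bf, Cf, cp]
  linear_combination ((2)*K*J^2*f0 + (5)*K*J^3*f0 + (4)*K*J^4*f0 + K*J^5*f0 + (2)*K^2*J*f0 + (8)*K^2*J^2*f0 + (9)*K^2*J^3*f0 + (3)*K^2*J^4*f0 + (3)*K^3*J*f0 + (6)*K^3*J^2*f0 + (3)*K^3*J^3*f0 + K^4*J*f0 + K^4*J^2*f0 + (2)*c*J^2*f0 + (5)*c*J^3*f0 + (4)*c*J^4*f0 + c*J^5*f0 + (8)*c*K*J*f0 + (25)*c*K*J^2*f0 + (24)*c*K*J^3*f0 + (7)*c*K*J^4*f0 + (2)*c*K^2*f0 + (19)*c*K^2*J*f0 + (29)*c*K^2*J^2*f0 + (12)*c*K^2*J^3*f0 + (3)*c*K^3*f0 + (10)*c*K^3*J*f0 + (7)*c*K^3*J^2*f0 + c*K^4*f0 + c*K^4*J*f0 + (6)*c^2*J*f0 + (17)*c^2*J^2*f0 + (15)*c^2*J^3*f0 + (4)*c^2*J^4*f0 + (6)*c^2*K*f0 + (32)*c^2*K*J*f0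 + (40)*c^2*K*J^2*f0 + (14)*c^2*K*J^3*f0 + (11)*c^2*K^2*f0 + (25)*c^2*K^2*J*f0 + (14)*c^2*K^2*J^2*f0 + (4)*c^2*K^3*f0 + (4)*c^2*K^3*J*f0 + (4)*c^3*f0 + (16)*c^3*J*f0 + (17)*c^3*J^2*f0 + (5)*c^3*J^3*f0 + (12)*c^3*K*f0 + (22)*c^3*K*J*f0 + (10)*c^3*K*J^2*f0 + (5)*c^3*K^2*f0 + (5)*c^3*K^2*J*f0 + (4)*c^4*f0 + (6)*c^4*J*f0 + (2)*c^4*J^2*f0 + (2)*c^4*K*f0 + (2)*c^4*K*J*f0) * e2 + ((-2)*K*J^2*g0 + (-3)*K*J^3*g0 + (-1)*K*J^4*g0 + (-2)*K^2*J*g0 + (-3)*K^2*J^2*g0 + (-1)*K^2*J^3*g0 + (-2)*c*J^2*g0 + (-3)*c*J^3*g0 + (-1)*c*J^4*g0 + (-8)*c*K*J*g0 + (-16)*c*K*J^2*g0 + (-8)*c*K*J^3*g0 + (-1)*c*K*J^4*g0 + (-2)*c*K^2*g0 + (-7)*c*K^2*J*g0 + (-5)*c*K^2*J^2*g0 + (-1)*c*K^2*J^3*g0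 + (-6)*c^2*J*g0 + (-13)*c^2*J^2*g0 + (-7)*c^2*J^3*g0 + (-1)*c^2*J^4*g0 + (-2)*c^2*K*g0 + (-13)*c^2*K*J*g0 + (-10)*c^2*K*J^2*g0 + (-2)*c^2*K*J^3*g0 + (-2)*c^2*K^2*g0 + (-3)*c^2*K^2*J*g0 + (-1)*c^2*K^2*J^2*g0 + (-6)*c^3*J*g0 + (-5)*c^3*J^2*g0 + (-1)*c^3*J^3*g0 + (-2)*c^3*K*g0 + (-3)*c^3*K*J*g0 + (-1)*c^3*K*J^2*g0 + (2)*b*K*J^2*g0 + (3)*b*K*J^3*g0 + b*K*J^4*g0 + (2)*b*K^2*J*g0 + (3)*b*K^2*J^2*g0 + b*K^2*J^3*g0 + (2)*b*c*J^2*g0 + (3)*b*c*J^3*g0 + b*c*J^4*g0 + (-4)*b*c*K*g0 + (-4)*b*c*K*J*g0 + (3)*b*c*K*J^2*g0 + (2)*b*c*K*J^3*g0 + (2)*b*c*K^2*J*g0 + b*c*K^2*J^2*g0 + (-4)*b*c^2*g0 + (-6)*b*c^2*J*g0 + b*c^2*J^3*g0 + (-4)*b*c^2*K*g0 + b*c^2*K*J^2*g0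 + (-4)*b*c^3*g0 + (-2)*b*c^3*J*g0 + (2)*a*K*J^2*g0 + (3)*a*K*J^3*g0 + a*K*J^4*g0 + (2)*a*K^2*J*g0 + (3)*a*K^2*J^2*g0 + a*K^2*J^3*g0 + (2)*a*c*J^2*g0 + (3)*a*c*J^3*g0 + a*c*J^4*g0 + (-4)*a*c*K*g0 + (-4)*a*c*K*J*g0 + (3)*a*c*K*J^2*g0 + (2)*a*c*K*J^3*g0 + (2)*a*c*K^2*J*g0 + a*c*K^2*J^2*g0 + (-4)*a*c^2*g0 + (-6)*a*c^2*J*g0 + a*c^2*J^3*g0 + (-4)*a*c^2*K*g0 + a*c^2*K*J^2*g0 + (-4)*a*c^3*g0 + (-2)*a*c^3*J*g0 + (4)*a*b*K*g0 + (12)*a*b*K*J*g0 + (11)*a*b*K*J^2*g0 + (3)*a*b*K*J^3*g0 + (2)*a*b*K^2*g0 + (3)*a*b*K^2*J*g0 + a*b*K^2*J^2*g0 + (4)*a*b*c*g0 + (12)*a*b*c*J*g0 + (11)*a*b*c*J^2*g0 + (3)*a*b*c*J^3*g0 + (10)*a*b*c*K*g0 + (17)*a*b*c*K*J*g0 + (6)*a*b*c*K*J^2*g0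 + (2)*a*b*c*K^2*g0 + a*b*c*K^2*J*g0 + (8)*a*b*c^2*g0 + (14)*a*b*c^2*J*g0 + (5)*a*b*c^2*J^2*g0 + (6)*a*b*c^2*K*g0 + (3)*a*b*c^2*K*J*g0 + (4)*a*b*c^3*g0 + (2)*a*b*c^3*J*g0) * e3 + ((-2)*K*J^2*f0 + (-5)*K*J^3*f0 + (-4)*K*J^4*f0 + (-1)*K*J^5*f0 + (-6)*K^2*J*f0 + (-15)*K^2*J^2*f0 + (-12)*K^2*J^3*f0 + (-3)*K^2*J^4*f0 + (-4)*K^3*f0 + (-12)*K^3*J*f0 + (-11)*K^3*J^2*f0 + (-3)*K^3*J^3*f0 + (-2)*K^4*f0 + (-3)*K^4*J*f0 + (-1)*K^4*J^2*f0 + (-2)*c*J^2*f0 + (-5)*c*J^3*f0 + (-4)*c*J^4*f0 + (-1)*c*J^5*f0 + (-8)*c*K*J*f0 + (-22)*c*K*J^2*f0 + (-19)*c*K*J^3*f0 + (-5)*c*K*J^4*f0 + (-10)*c*K^2*f0 + (-33)*c*K^2*J*f0 + (-32)*c*K^2*J^2*f0 + (-9)*c*K^2*J^3*f0 + (-10)*c*K^3*f0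 + (-17)*c*K^3*J*f0 + (-6)*c*K^3*J^2*f0 + (-2)*c*K^4*f0 + (-1)*c*K^4*J*f0 + (-2)*c^2*J*f0 + (-7)*c^2*J^2*f0 + (-7)*c^2*J^3*f0 + (-2)*c^2*J^4*f0 + (-6)*c^2*K*f0 + (-23)*c^2*K*J*f0 + (-24)*c^2*K*J^2*f0 + (-7)*c^2*K*J^3*f0 + (-14)*c^2*K^2*f0 + (-23)*c^2*K^2*J*f0 + (-8)*c^2*K^2*J^2*f0 + (-6)*c^2*K^3*f0 + (-3)*c^2*K^3*J*f0 + (-2)*c^3*J*f0 + (-3)*c^3*J^2*f0 + (-1)*c^3*J^3*f0 + (-6)*c^3*K*f0 + (-9)*c^3*K*J*f0 + (-3)*c^3*K*J^2*f0 + (-4)*c^3*K^2*f0 + (-2)*c^3*K^2*J*f0 + (-4)*b*K*J*f0 + (-10)*b*K*J^2*f0 + (-8)*b*K*J^3*f0 + (-2)*b*K*J^4*f0 + (-4)*b*K^2*f0 + (-12)*b*K^2*J*f0 + (-11)*b*K^2*J^2*f0 + (-3)*b*K^2*J^3*f0 + (-2)*b*K^3*f0 + (-3)*b*K^3*J*f0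 + (-1)*b*K^3*J^2*f0 + (-4)*b*c*J*f0 + (-10)*b*c*J^2*f0 + (-8)*b*c*J^3*f0 + (-2)*b*c*J^4*f0 + (-8)*b*c*K*f0 + (-26)*b*c*K*J*f0 + (-25)*b*c*K*J^2*f0 + (-7)*b*c*K*J^3*f0 + (-10)*b*c*K^2*f0 + (-17)*b*c*K^2*J*f0 + (-6)*b*c*K^2*J^2*f0 + (-2)*b*c*K^3*f0 + (-1)*b*c*K^3*J*f0 + (-4)*b*c^2*f0 + (-14)*b*c^2*J*f0 + (-14)*b*c^2*J^2*f0 + (-4)*b*c^2*J^3*f0 + (-12)*b*c^2*K*f0 + (-20)*b*c^2*K*J*f0 + (-7)*b*c^2*K*J^2*f0 + (-6)*b*c^2*K^2*f0 + (-3)*b*c^2*K^2*J*f0 + (-4)*b*c^3*f0 + (-6)*b*c^3*J*f0 + (-2)*b*c^3*J^2*f0 + (-4)*b*c^3*K*f0 + (-2)*b*c^3*K*J*f0 + (-4)*a*K*J*f0 + (-10)*a*K*J^2*f0 + (-8)*a*K*J^3*f0 + (-2)*a*K*J^4*f0 + (-4)*a*K^2*f0 + (-12)*a*K^2*J*f0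 + (-11)*a*K^2*J^2*f0 + (-3)*a*K^2*J^3*f0 + (-2)*a*K^3*f0 + (-3)*a*K^3*J*f0 + (-1)*a*K^3*J^2*f0 + (-4)*a*c*J*f0 + (-10)*a*c*J^2*f0 + (-8)*a*c*J^3*f0 + (-2)*a*c*J^4*f0 + (-8)*a*c*K*f0 + (-26)*a*c*K*J*f0 + (-25)*a*c*K*J^2*f0 + (-7)*a*c*K*J^3*f0 + (-10)*a*c*K^2*f0 + (-17)*a*c*K^2*J*f0 + (-6)*a*c*K^2*J^2*f0 + (-2)*a*c*K^3*f0 + (-1)*a*c*K^3*J*f0 + (-4)*a*c^2*f0 + (-14)*a*c^2*J*f0 + (-14)*a*c^2*J^2*f0 + (-4)*a*c^2*J^3*f0 + (-12)*a*c^2*K*f0 + (-20)*a*c^2*K*J*f0 + (-7)*a*c^2*K*J^2*f0 + (-6)*a*c^2*K^2*f0 + (-3)*a*c^2*K^2*J*f0 + (-4)*a*c^3*f0 + (-6)*a*c^3*J*f0 + (-2)*a*c^3*J^2*f0 + (-4)*a*c^3*K*f0 + (-2)*a*c^3*K*J*f0 + (-4)*a*b*K*f0 + (-12)*a*b*K*J*f0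 + (-11)*a*b*K*J^2*f0 + (-3)*a*b*K*J^3*f0 + (-2)*a*b*K^2*f0 + (-3)*a*b*K^2*J*f0 + (-1)*a*b*K^2*J^2*f0 + (-4)*a*b*c*f0 + (-12)*a*b*c*J*f0 + (-11)*a*b*c*J^2*f0 + (-3)*a*b*c*J^3*f0 + (-10)*a*b*c*K*f0 + (-17)*a*b*c*K*J*f0 + (-6)*a*b*c*K*J^2*f0 + (-2)*a*b*c*K^2*f0 + (-1)*a*b*c*K^2*J*f0 + (-8)*a*b*c^2*f0 + (-14)*a*b*c^2*J*f0 + (-5)*a*b*c^2*J^2*f0 + (-6)*a*b*c^2*K*f0 + (-3)*a*b*c^2*K*J*f0 + (-4)*a*b*c^3*f0 + (-2)*a*b*c^3*J*f0) * e1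

set_option maxHeartbeats 1000000 in
lemma boundary_id (a b c nn : ℂ) (hc0 : c ≠ 0) (hcn : c + nn ≠ 0) (hn1 : nn + 1 ≠ 0) :
    nn * cp a b c nn nn / c + Af c nn * (a * b / c)
      + Af c nn * ((a + nn) * (b + nn) / ((nn + 1) * (c + nn))) - Bf a b c nn = 0 := by
  simp only [Af, Bf, cp]
  field_simp
  ring

lemma div_helper {L X Y D1 D2 W : ℂ} (h1 : D1 ≠ 0) (h2 : D2 ≠ 0) (hW : W ≠ 0)
    (h : W * (D1 * (D2 * L)) = W * (X * D2) - W * (Y * D1)) : L = X / D1 - Y / D2 := by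
  have h' : D1 * (D2 * L) = X * D2 - Y * D1 := by
    apply mul_left_cancel₀ hW
    linear_combination h
  field_simp
  linear_combination h'

/-! ### The Cauchy-product coefficients -/

noncomputable def v (a b c : ℂ) (n : ℕ) : ℂ :=
  ∑ k ∈ range (n + 1), f a b c k * f a b c (n - k)

lemma v_zero (a b c : ℂ) : v a b c 0 = 1 := by simp [v, f_zero]

lemma v_one {c : ℂ} (hc : ∀ k : ℕ, c + (k : ℂ) ≠ 0) (a b : ℂ) :
    v a b c 1 = 2 * a * b / c := by
  simp [v, Finset.sum_range_succ, f_zero, f_one hc]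
  ring

/-- The key three-term recurrence for the Cauchy-product coefficients,
proved by creative telescoping. -/
lemma vrec {c : ℂ} (hc : ∀ k : ℕ, c + (k : ℂ) ≠ 0) (a b : ℂ) (m : ℕ) :
    Af c ((m : ℂ) + 1) * v a b c (m + 2)
      = Bf a b c ((m : ℂ) + 1) * v a b c (m + 1) - Cf a b ((m : ℂ) + 1) * v a b c m := by
  set F : ℕ → ℂ := f a b c with hF
  set nn : ℂ := (m : ℂ) + 1 with hnn
  set g : ℕ → ℂ := fun k =>
    (k : ℂ) * cp a b c nn k * F k * F (m + 1 - k) /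
      (((m + 2 - k : ℕ) : ℂ) * (c + ((m + 1 - k : ℕ) : ℂ))) with hg
  have hterm : ∀ k, k ≤ m →
      Af c nn * (F k * F (m + 2 - k)) - Bf a b c nn * (F k * F (m + 1 - k))
        + Cf a b nn * (F k * F (m - k)) = g (k + 1) - g k := by
    intro k hk
    obtain ⟨j, rfl⟩ : ∃ j, m = k + j := ⟨m - k, by omega⟩
    have i1 : k + j + 2 - k = j + 2 := by omega
    have i2 : k + j + 1 - k = j + 1 := by omega
    have i3 : k + j - k = j := by omega
    have i4 : k + j + 1 - (k + 1) = j := by omega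
    have i5 : k + j + 2 - (k + 1) = j + 1 := by omega
    have hnn' : nn = (k : ℂ) + (j : ℂ) + 1 := by rw [hnn]; push_cast; ring
    have e1 : ((j : ℂ) + 1) * (c + (j : ℂ)) * F (j + 1)
        = (a + (j : ℂ)) * (b + (j : ℂ)) * F j := f_rec hc a b j
    have e2 : ((j : ℂ) + 2) * (c + ((j : ℂ) + 1)) * F (j + 2)
        = (a + ((j : ℂ) + 1)) * (b + ((j : ℂ) + 1)) * F (j + 1) := by
      have h := f_rec hc a b (j + 1)
      push_cast at h
      convert h using 2 <;> push_cast <;> ring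
    have e3 : ((k : ℂ) + 1) * (c + (k : ℂ)) * F (k + 1)
        = (a + (k : ℂ)) * (b + (k : ℂ)) * F k := f_rec hc a b k
    have hD1 : ((j : ℂ) + 1) * (c + (j : ℂ)) ≠ 0 := by
      apply mul_ne_zero _ (hc j)
      have : (((j + 1 : ℕ)) : ℂ) ≠ 0 := Nat.cast_ne_zero.mpr (Nat.succ_ne_zero j)
      simpa using this
    have hD2 : ((j : ℂ) + 2) * (c + ((j : ℂ) + 1)) ≠ 0 := by
      apply mul_ne_zero
      · have : (((j + 2 : ℕ)) : ℂ) ≠ 0 := Nat.cast_ne_zero.mpr (Nat.succ_ne_zero (j + 1))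
        intro h; apply this; push_cast; linear_combination h
      · have := hc (j + 1)
        intro h; apply this; push_cast; linear_combination h
    have hW : c + (k : ℂ) ≠ 0 := hc k
    have hstep := step_id_mul a b c (k : ℂ) (j : ℂ) (F k) (F (k + 1)) (F j) (F (j + 1))
      (F (j + 2)) e1 e2 e3
    have hmain : Af c nn * (F k * F (j + 2)) - Bf a b c nn * (F k * F (j + 1))
        + Cf a b nn * (F k * F j)
        = ((k : ℂ) + 1) * cp a b c nn ((k : ℂ) + 1) * F (k + 1) * F j
            / (((j : ℂ) + 1) * (c + (j : ℂ)))
          - (k : ℂ) * cp a b c nn (k : ℂ) * F k * F (j + 1)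
            / (((j : ℂ) + 2) * (c + ((j : ℂ) + 1))) := by
      rw [hnn']
      exact div_helper hD1 hD2 hW hstep
    simp only [hg, i1, i2, i3, i4, i5]
    push_cast
    convert hmain using 2 <;> push_cast <;> ring
  have hsum : ∑ k ∈ range (m + 1),
      (Af c nn * (F k * F (m + 2 - k)) - Bf a b c nn * (F k * F (m + 1 - k))
        + Cf a b nn * (F k * F (m - k))) = g (m + 1) - g 0 := by
    rw [← Finset.sum_range_sub g (m + 1)]
    exact Finset.sum_congr rfl fun k hk =>
      hterm k (Nat.lt_succ_iff.mp (Finset.mem_range.mp hk))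
  have hg0 : g 0 = 0 := by simp [hg]
  have hgm : g (m + 1) = nn * cp a b c nn nn * F (m + 1) / c := by
    have i1 : m + 1 - (m + 1) = 0 := by omega
    have i2 : m + 2 - (m + 1) = 1 := by omega
    simp only [hg, i1, i2, f_zero]
    rw [hnn]
    push_cast
    simp [hF, f_zero]
  have key : Af c nn * (∑ k ∈ range (m + 1), F k * F (m + 2 - k))
      - Bf a b c nn * (∑ k ∈ range (m + 1), F k * F (m + 1 - k))
      + Cf a b nn * (∑ k ∈ range (m + 1), F k * F (m - k))
      = nn * cp a b c nn nn * F (m + 1) / c := by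
    rw [← hgm, ← sub_zero (g (m + 1)), ← hg0, ← hsum]
    rw [Finset.sum_add_distrib, Finset.sum_sub_distrib, ← Finset.mul_sum, ← Finset.mul_sum,
      ← Finset.mul_sum]
  have hv2 : v a b c (m + 2) = (∑ k ∈ range (m + 1), F k * F (m + 2 - k))
      + F (m + 1) * F 1 + F (m + 2) * F 0 := by
    have i1 : m + 2 - (m + 1) = 1 := by omega
    rw [v, show m + 2 + 1 = (m + 1) + 1 + 1 from rfl, Finset.sum_range_succ,
      Finset.sum_range_succ, i1, Nat.sub_self]
  have hv1 : v a b c (m + 1) = (∑ k ∈ range (m + 1), F k * F (m + 1 - k)) + F (m + 1) * F 0 := by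
    rw [v, Finset.sum_range_succ, Nat.sub_self]
  have hv0 : v a b c m = ∑ k ∈ range (m + 1), F k * F (m - k) := rfl
  have hf1 : F 1 = a * b / c := f_one hc a b
  have hf0 : F 0 = 1 := f_zero a b c
  have hfm2 : F (m + 2) = F (m + 1) * ((a + nn) * (b + nn) / ((nn + 1) * (c + nn))) := by
    have h := f_succ hc a b (m + 1)
    rw [hnn]
    push_cast at h ⊢
    convert h using 3 <;> push_cast <;> ring
  have hc0 : c ≠ 0 := by simpa using hc 0
  have hcn : c + nn ≠ 0 := by
    have := hc (m + 1)
    intro h; apply this; rw [hnn] at h; push_cast; linear_combination h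
  have hn1 : nn + 1 ≠ 0 := by
    have : (((m + 2 : ℕ)) : ℂ) ≠ 0 := Nat.cast_ne_zero.mpr (Nat.succ_ne_zero (m + 1))
    intro h; apply this; rw [hnn] at h; push_cast; linear_combination h
  have bnd := boundary_id a b c nn hc0 hcn hn1
  rw [hv2, hv1, hv0, hf1, hf0, hfm2]
  linear_combination key + F (m + 1) * bnd

lemma inv_shift_tendsto (w : ℂ) :
    Tendsto (fun k : ℕ => (w + (k : ℂ))⁻¹) atTop (nhds 0) := by
  rw [tendsto_zero_iff_norm_tendsto_zero]
  have hbig : Tendsto (fun k : ℕ => ‖w + (k : ℂ)‖) atTop atTop := by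
    apply tendsto_atTop_mono (f := fun k : ℕ => (k : ℝ) - ‖w‖)
    · intro k
      have h : ‖(k : ℂ)‖ - ‖-w‖ ≤ ‖(k : ℂ) - (-w)‖ := norm_sub_norm_le _ _
      rw [sub_neg_eq_add, norm_neg] at h
      calc (k : ℝ) - ‖w‖ = ‖(k : ℂ)‖ - ‖w‖ := by simp
        _ ≤ ‖(k : ℂ) + w‖ := h
        _ = ‖w + (k : ℂ)‖ := by rw [add_comm]
    · exact tendsto_atTop_add_const_right _ _ tendsto_natCast_atTop_atTop
  simp only [norm_inv]; exact hbig.inv_tendsto_atTop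

lemma ratio_tendsto {c : ℂ} (hc : ∀ k : ℕ, c + (k : ℂ) ≠ 0) (a b : ℂ) :
    Tendsto (fun k : ℕ => (a + (k : ℂ)) * (b + k) / (((k : ℂ) + 1) * (c + k)))
      atTop (nhds 1) := by
  have key : Tendsto (fun k : ℕ => (1 + (a - c) * (c + (k : ℂ))⁻¹)
      * (1 + (b - 1) * (1 + (k : ℂ))⁻¹)) atTop (nhds 1) := by
    have h1 : Tendsto (fun k : ℕ => 1 + (a - c) * (c + (k : ℂ))⁻¹) atTop (nhds 1) := by
      have := (inv_shift_tendsto c).const_mul (a - c)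
      have h := tendsto_const_nhds (x := (1 : ℂ)) (f := atTop (α := ℕ)) |>.add this
      simpa using h
    have h2 : Tendsto (fun k : ℕ => 1 + (b - 1) * (1 + (k : ℂ))⁻¹) atTop (nhds 1) := by
      have := (inv_shift_tendsto 1).const_mul (b - 1)
      have h := tendsto_const_nhds (x := (1 : ℂ)) (f := atTop (α := ℕ)) |>.add this
      simpa using h
    simpa using h1.mul h2
  apply key.congr
  intro k
  have hck : c + (k : ℂ) ≠ 0 := hc k
  have hk1 : (1 : ℂ) + (k : ℂ) ≠ 0 := by
    have h2 : (((k + 1 : ℕ)) : ℂ) ≠ 0 := Nat.cast_ne_zero.mpr (Nat.succ_ne_zero k)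
    push_cast at h2
    intro h; apply h2; linear_combination h
  have e1 : 1 + (a - c) * (c + (k : ℂ))⁻¹ = (a + k) / (c + k) := by
    field_simp
    ring
  have e2 : 1 + (b - 1) * (1 + (k : ℂ))⁻¹ = (b + k) / (1 + k) := by
    field_simp
    ring
  rw [e1, e2, div_mul_div_comm]
  ring_nf

lemma summable_fz {c : ℂ} (hc : ∀ k : ℕ, c + (k : ℂ) ≠ 0) (a b : ℂ) {z : ℂ}
    (hz : ‖z‖ < 1) :
    Summable (fun k : ℕ => f a b c k * z ^ k) ∧
      Summable (fun k : ℕ => ‖f a b c k * z ^ k‖) := by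
  set t : ℕ → ℂ := fun k => f a b c k * z ^ k with ht
  set r : ℝ := (1 + ‖z‖) / 2 with hr
  have hz' : ‖z‖ < 1 := hz
  have hr1 : r < 1 := by rw [hr]; linarith
  have hzr : ‖z‖ < r := by rw [hr]; linarith
  have hq : Tendsto (fun k : ℕ => ‖z * ((a + (k : ℂ)) * (b + k) / (((k : ℂ) + 1) * (c + k)))‖)
      atTop (nhds ‖z‖) := by
    have := (tendsto_const_nhds (x := z) (f := atTop (α := ℕ))).mul (ratio_tendsto hc a b)
    simpa using this.norm
  have hev : ∀ᶠ k : ℕ in atTop, ‖t (k + 1)‖ ≤ r * ‖t k‖ := by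
    filter_upwards [hq.eventually_lt_const hzr] with k hk
    have hstep : t (k + 1) = t k * (z * ((a + (k : ℂ)) * (b + k) / (((k : ℂ) + 1) * (c + k)))) := by
      simp only [ht, f_succ hc a b k, pow_succ]
      try ring
    rw [hstep, norm_mul]
    have h0 : (0 : ℝ) ≤ ‖t k‖ := norm_nonneg _
    calc ‖t k‖ * ‖z * ((a + (k : ℂ)) * (b + k) / (((k : ℂ) + 1) * (c + k)))‖
        ≤ ‖t k‖ * r := mul_le_mul_of_nonneg_left (le_of_lt hk) h0
      _ = r * ‖t k‖ := by ring
  constructor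
  · exact summable_of_ratio_norm_eventually_le hr1 hev
  · apply summable_of_ratio_norm_eventually_le hr1
    filter_upwards [hev] with k hk
    rw [Real.norm_of_nonneg (norm_nonneg _), Real.norm_of_nonneg (norm_nonneg _)]
    exact hk


lemma comb_helper {A B C v2 v1 v0 : ℂ} (hA : A ≠ 0) (h : A * v2 = B * v1 - C * v0) :
    B / A * v1 + -C / A * v0 = v2 := by
  field_simp
  linear_combination -h

end SqHyp

theorem squared_hypergeometric_recurrence
    (a b c z : ℂ)
    (hc : ∀ k : ℕ, c + (k : ℂ) ≠ 0)
    (hc2 : ∀ k : ℕ, 2 * c + (k : ℂ) ≠ 0)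
    (hz : ‖z‖ < 1)
    (u : ℕ → ℂ)
    (hu0 : u 0 = 1)
    (hu1 : u 1 = 2 * a * b / c)
    (hrec : ∀ n : ℕ, 1 ≤ n →
      u (n + 1) =
        ((2 * (n : ℂ) ^ 3 + 3 * (a + b + c - 1) * (n : ℂ) ^ 2
            + ((a + b) * (4 * c - 3) + 4 * a * b - c + 1) * (n : ℂ)
            + 2 * a * b * (2 * c - 1)) /
          (((n : ℂ) + 1) * (c + (n : ℂ)) * (2 * c + (n : ℂ) - 1))) * u n
        + (-((2 * a + (n : ℂ) - 1) * (2 * b + (n : ℂ) - 1) * (a + b + (n : ℂ) - 1)) /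
          (((n : ℂ) + 1) * (c + (n : ℂ)) * (2 * c + (n : ℂ) - 1))) * u (n - 1)) :
    (hyperF a b c z) ^ 2 = ∑' n : ℕ, u n * z ^ n := by
  classical
  obtain ⟨hsummable, hnorm⟩ := SqHyp.summable_fz hc a b hz
  have hF : hyperF a b c z = ∑' k : ℕ, SqHyp.f a b c k * z ^ k := rfl
  have hcauchy : (hyperF a b c z) ^ 2 = ∑' n : ℕ, SqHyp.v a b c n * z ^ n := by
    rw [hF, sq, tsum_mul_tsum_eq_tsum_sum_range_of_summable_norm hnorm hnorm]
    apply tsum_congr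
    intro n
    rw [SqHyp.v, Finset.sum_mul]
    apply Finset.sum_congr rfl
    intro k hk
    have hk' : k ≤ n := Nat.lt_succ_iff.mp (Finset.mem_range.mp hk)
    have hzp : z ^ k * z ^ (n - k) = z ^ n := by
      rw [← pow_add]; congr 1; omega
    calc SqHyp.f a b c k * z ^ k * (SqHyp.f a b c (n - k) * z ^ (n - k))
        = SqHyp.f a b c k * SqHyp.f a b c (n - k) * (z ^ k * z ^ (n - k)) := by ring
      _ = SqHyp.f a b c k * SqHyp.f a b c (n - k) * z ^ n := by rw [hzp]
  have huv : ∀ n : ℕ, u n = SqHyp.v a b c n := by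
    intro N
    induction N using Nat.strong_induction_on with
    | _ N ih =>
      rcases N with _ | N
      · rw [hu0, SqHyp.v_zero]
      rcases N with _ | m
      · rw [hu1, SqHyp.v_one hc]
      have h1 := ih (m + 1) (by omega)
      have h0 := ih m (by omega)
      have hr := hrec (m + 1) (by omega)
      simp only [Nat.add_sub_cancel] at hr
      push_cast at hr
      show u (m + 1 + 1) = SqHyp.v a b c (m + 1 + 1)
      rw [hr, h1, h0]
      have hv := SqHyp.vrec hc a b m
      simp only [SqHyp.Af, SqHyp.Bf, SqHyp.Cf] at hv
      have hA : ((m : ℂ) + 1 + 1) * (c + ((m : ℂ) + 1)) * (2 * c + ((m : ℂ) + 1) - 1) ≠ 0 := by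
        apply mul_ne_zero (mul_ne_zero ?_ ?_) ?_
        · have h2 : (((m + 2 : ℕ)) : ℂ) ≠ 0 := Nat.cast_ne_zero.mpr (by omega)
          intro h; apply h2; push_cast; linear_combination h
        · have h2 := hc (m + 1)
          intro h; apply h2; push_cast; linear_combination h
        · have h2 := hc2 m
          intro h; apply h2; linear_combination h
      exact SqHyp.comb_helper hA hv
  rw [hcauchy]
  exact tsum_congr fun n => by rw [huv n]
end

section
/- Let z be a complex number with |z| < 1. Define a sequence (u_n) of rational (or real) numbers by u_0 = 1, u_1 = 1/2, and for n ≥ 1, u_{n+1} = ((n(n(2n+3)+2) + 1/2)/(n+1)³) u_n − (n³/(n+1)³) u_{n-1}. Then F(1/2, 1/2; 1; z²)² = ∑_{n=0}^∞ u_n z^{2n}. (Equivalently, the square of the complete elliptic integral of the first kind satisfies K(z)² = (π²/4) ∑_{n=0}^∞ u_n z^{2n}, since K(z) = (π/2) F(1/2,1/2;1;z²).) -/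
open scoped Nat

noncomputable def aa (j : ℕ) : ℝ := ((ascPochhammer ℝ j).eval (1/2 : ℝ) / (j ! : ℝ)) ^ 2

noncomputable def cc (n : ℕ) : ℝ := ∑ j ∈ Finset.range (n + 1), aa j * aa (n - j)

lemma poch_pos (j : ℕ) : 0 < (ascPochhammer ℝ j).eval (1/2 : ℝ) := by
  induction j with
  | zero => simp
  | succ j ih =>
    rw [ascPochhammer_succ_eval]
    have : (0:ℝ) < 1/2 + j := by positivity
    exact mul_pos ih this

lemma aa_pos (j : ℕ) : 0 < aa j := by
  have h1 := poch_pos j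
  have h2 : (0:ℝ) < (j ! : ℝ) := by positivity
  exact pow_pos (div_pos h1 h2) 2

lemma aa_zero : aa 0 = 1 := by simp [aa]

lemma aa_one : aa 1 = 1/4 := by
  simp [aa, ascPochhammer_succ_eval]
  norm_num

lemma aa_ratio (j : ℕ) : 4 * ((j:ℝ) + 1) ^ 2 * aa (j + 1) = (2 * (j:ℝ) + 1) ^ 2 * aa j := by
  unfold aa
  rw [ascPochhammer_succ_eval, Nat.factorial_succ]
  have h : ((j ! : ℕ) : ℝ) ≠ 0 := by positivity
  push_cast
  field_simp
  ring

lemma key_identity (x y A B C D E : ℝ) (hx : 0 ≤ x) (hy : 0 ≤ y)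
    (hB : 4 * (x + 1) ^ 2 * B = (2 * x + 1) ^ 2 * A)
    (hD : 4 * (y + 1) ^ 2 * D = (2 * y + 1) ^ 2 * C)
    (hE : 4 * (y + 2) ^ 2 * E = (2 * y + 3) ^ 2 * D) :
    (x + y + 2) ^ 3 * (A * E)
      - (2 * (x + y + 1) ^ 3 + 3 * (x + y + 1) ^ 2 + 2 * (x + y + 1) + 1/2) * (A * D)
      + (x + y + 1) ^ 3 * (A * C)
    = (x + 1) ^ 2 * ((4 * (x + y + 1) + 1) * (x + y + 2) - 2 * (x + 1) * (2 * (x + y + 1) + 1))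
        / (4 * (y + 1) ^ 2) * (B * C)
      - x ^ 2 * ((4 * (x + y + 1) + 1) * (x + y + 2) - 2 * x * (2 * (x + y + 1) + 1))
        / (4 * (y + 2) ^ 2) * (A * D) := by
  have h1 : (x + 1 : ℝ) ≠ 0 := by positivity
  have h2 : (y + 1 : ℝ) ≠ 0 := by positivity
  have h3 : (y + 2 : ℝ) ≠ 0 := by positivity
  have hBv : B = (2 * x + 1) ^ 2 * A / (4 * (x + 1) ^ 2) := by
    field_simp; linarith
  have hDv : D = (2 * y + 1) ^ 2 * C / (4 * (y + 1) ^ 2) := by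
    field_simp; linarith
  have hEv : E = (2 * y + 3) ^ 2 * D / (4 * (y + 2) ^ 2) := by
    field_simp; linarith
  subst hEv hDv hBv
  field_simp
  ring

lemma cc_rec (m : ℕ) :
    ((m:ℝ) + 2) ^ 3 * cc (m + 2)
      = (2 * ((m:ℝ) + 1) ^ 3 + 3 * ((m:ℝ) + 1) ^ 2 + 2 * ((m:ℝ) + 1) + 1/2) * cc (m + 1)
        - ((m:ℝ) + 1) ^ 3 * cc m := by
  set g : ℕ → ℝ := fun j =>
    (j:ℝ) ^ 2 * ((4 * ((m:ℝ) + 1) + 1) * ((m:ℝ) + 2) - 2 * (j:ℝ) * (2 * ((m:ℝ) + 1) + 1))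
      / (4 * (((m:ℝ) + 1) - (j:ℝ) + 1) ^ 2) * (aa j * aa (m + 1 - j)) with hg
  have e2 : cc (m + 2) = (∑ j ∈ Finset.range (m + 1), aa j * aa (m + 2 - j))
      + aa (m + 1) * aa 1 + aa (m + 2) * aa 0 := by
    show (∑ j ∈ Finset.range (m + 2 + 1), aa j * aa (m + 2 - j)) = _
    rw [Finset.sum_range_succ, Finset.sum_range_succ]
    have h1 : m + 2 - (m + 1) = 1 := by omega
    have h2 : m + 2 - (m + 2) = 0 := by omega
    rw [h1, h2]
  have e1 : cc (m + 1) = (∑ j ∈ Finset.range (m + 1), aa j * aa (m + 1 - j))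
      + aa (m + 1) * aa 0 := by
    show (∑ j ∈ Finset.range (m + 1 + 1), aa j * aa (m + 1 - j)) = _
    rw [Finset.sum_range_succ]
    have h2 : m + 1 - (m + 1) = 0 := by omega
    rw [h2]
  have e0 : cc m = ∑ j ∈ Finset.range (m + 1), aa j * aa (m - j) := rfl
  have htel : ∑ j ∈ Finset.range (m + 1),
      (((m:ℝ) + 2) ^ 3 * (aa j * aa (m + 2 - j))
        - (2 * ((m:ℝ) + 1) ^ 3 + 3 * ((m:ℝ) + 1) ^ 2 + 2 * ((m:ℝ) + 1) + 1/2)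
          * (aa j * aa (m + 1 - j))
        + ((m:ℝ) + 1) ^ 3 * (aa j * aa (m - j))) = g (m + 1) - g 0 := by
    rw [← Finset.sum_range_sub g]
    refine Finset.sum_congr rfl fun j hj => ?_
    rw [Finset.mem_range] at hj
    obtain ⟨k, rfl⟩ : ∃ k, m = j + k := ⟨m - j, by omega⟩
    have h2 : j + k + 2 - j = k + 2 := by omega
    have h1 : j + k + 1 - j = k + 1 := by omega
    have h0 : j + k - j = k := by omega
    have h1' : j + k + 1 - (j + 1) = k := by omega
    rw [h2, h1, h0, hg]
    simp only [h1', h1]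
    have key := key_identity (j:ℝ) (k:ℝ) (aa j) (aa (j+1)) (aa k) (aa (k+1)) (aa (k+2))
      (Nat.cast_nonneg j) (Nat.cast_nonneg k)
      (by exact_mod_cast aa_ratio j)
      (by exact_mod_cast aa_ratio k)
      (by exact_mod_cast aa_ratio (k+1))
    push_cast
    linear_combination key
  have hg0 : g 0 = 0 := by simp [hg]
  have hgtop : g (m + 1) =
      ((m:ℝ) + 1) ^ 2 * ((4 * ((m:ℝ) + 1) + 1) * ((m:ℝ) + 2)
        - 2 * ((m:ℝ) + 1) * (2 * ((m:ℝ) + 1) + 1)) / 4 * (aa (m + 1) * aa 0) := by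
    simp only [hg, Nat.add_sub_cancel_left, Nat.sub_self]
    push_cast
    ring
  have hr : 4 * ((m:ℝ) + 2) ^ 2 * aa (m + 2) = (2 * (m:ℝ) + 3) ^ 2 * aa (m + 1) := by
    have := aa_ratio (m + 1)
    push_cast at this
    show 4 * ((m:ℝ) + 2) ^ 2 * aa (m + 1 + 1) = (2 * (m:ℝ) + 3) ^ 2 * aa (m + 1)
    linarith [this]
  have expand : ((m:ℝ) + 2) ^ 3 * (∑ j ∈ Finset.range (m + 1), aa j * aa (m + 2 - j))
      - (2 * ((m:ℝ) + 1) ^ 3 + 3 * ((m:ℝ) + 1) ^ 2 + 2 * ((m:ℝ) + 1) + 1/2)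
        * (∑ j ∈ Finset.range (m + 1), aa j * aa (m + 1 - j))
      + ((m:ℝ) + 1) ^ 3 * (∑ j ∈ Finset.range (m + 1), aa j * aa (m - j))
      = g (m + 1) - g 0 := by
    rw [Finset.mul_sum, Finset.mul_sum, Finset.mul_sum, ← Finset.sum_sub_distrib,
      ← Finset.sum_add_distrib]
    exact htel
  rw [e2, e1, e0]
  rw [hg0, hgtop, aa_zero] at expand
  rw [aa_zero, aa_one]
  linear_combination expand + (((m:ℝ) + 2) / 4) * hr

lemma aa_le_one (j : ℕ) : aa j ≤ 1 := by
  induction j with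
  | zero => rw [aa_zero]
  | succ j ih =>
    have hr := aa_ratio j
    have hp := aa_pos j
    have hp' := aa_pos (j + 1)
    have hj : (0:ℝ) ≤ (j:ℝ) := Nat.cast_nonneg j
    nlinarith

lemma hsummable (w : ℂ) (hw : ‖w‖ < 1) : Summable fun k => ‖((aa k : ℝ) : ℂ) * w ^ k‖ := by
  refine Summable.of_nonneg_of_le (fun k => norm_nonneg _) (fun k => ?_)
    (summable_geometric_of_lt_one (norm_nonneg w) hw)
  rw [norm_mul, norm_pow, Complex.norm_real]
  calc |aa k| * ‖w‖ ^ k ≤ 1 * ‖w‖ ^ k := by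
        apply mul_le_mul_of_nonneg_right _ (by positivity)
        rw [abs_of_pos (aa_pos k)]; exact aa_le_one k
    _ = ‖w‖ ^ k := one_mul _

lemma hyperF_eq (w : ℂ) : hyperF (1/2) (1/2) 1 w = ∑' k : ℕ, ((aa k : ℝ) : ℂ) * w ^ k := by
  unfold hyperF
  refine tsum_congr fun k => ?_
  have hcast : (ascPochhammer ℂ k).eval (1/2 : ℂ)
      = (((ascPochhammer ℝ k).eval (1/2 : ℝ) : ℝ) : ℂ) := by
    rw [ascPochhammer_eval₂ (algebraMap ℝ ℂ)]
    have h12 : (1/2 : ℂ) = algebraMap ℝ ℂ (1/2 : ℝ) := by norm_num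
    rw [h12, Polynomial.eval₂_at_apply]
    rfl
  rw [hcast, ascPochhammer_eval_one, aa]
  have hk : ((k ! : ℕ) : ℂ) ≠ 0 := by
    exact_mod_cast Nat.cast_ne_zero.mpr (Nat.factorial_ne_zero k)
  push_cast
  rw [div_pow]
  ring

lemma sq_eq (w : ℂ) (hw : ‖w‖ < 1) :
    (∑' k : ℕ, ((aa k : ℝ) : ℂ) * w ^ k) ^ 2 = ∑' n : ℕ, ((cc n : ℝ) : ℂ) * w ^ n := by
  rw [sq, tsum_mul_tsum_eq_tsum_sum_range_of_summable_norm (hsummable w hw) (hsummable w hw)]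
  refine tsum_congr fun n => ?_
  have hc : ((cc n : ℝ) : ℂ) = ∑ j ∈ Finset.range (n + 1), ((aa j : ℝ) : ℂ) * ((aa (n - j) : ℝ) : ℂ) := by
    rw [cc]; push_cast; rfl
  rw [hc, Finset.sum_mul]
  refine Finset.sum_congr rfl fun j hj => ?_
  rw [Finset.mem_range] at hj
  have hjn : j + (n - j) = n := by omega
  calc ((aa j : ℝ) : ℂ) * w ^ j * (((aa (n - j) : ℝ) : ℂ) * w ^ (n - j))
      = ((aa j : ℝ) : ℂ) * ((aa (n - j) : ℝ) : ℂ) * w ^ (j + (n - j)) := by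
        rw [pow_add]; ring
    _ = ((aa j : ℝ) : ℂ) * ((aa (n - j) : ℝ) : ℂ) * w ^ n := by rw [hjn]

lemma cc_zero : cc 0 = 1 := by simp [cc, aa_zero]

lemma cc_one : cc 1 = 1/2 := by
  simp [cc, Finset.sum_range_succ, aa_zero, aa_one]
  norm_num

theorem squared_elliptic_K_recurrence
    (z : ℂ) (hz : ‖z‖ < 1)
    (u : ℕ → ℝ)
    (hu0 : u 0 = 1)
    (hu1 : u 1 = 1 / 2)
    (hrec : ∀ n : ℕ, 1 ≤ n →
      u (n + 1) =
        (((n : ℝ) * ((n : ℝ) * (2 * (n : ℝ) + 3) + 2) + 1 / 2) / ((n : ℝ) + 1) ^ 3) * u n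
        - ((n : ℝ) ^ 3 / ((n : ℝ) + 1) ^ 3) * u (n - 1)) :
    (hyperF (1 / 2) (1 / 2) 1 (z ^ 2)) ^ 2 = ∑' n : ℕ, (u n : ℂ) * z ^ (2 * n) := by
  have u_eq : ∀ n, u n = cc n := by
    have key : ∀ n, u n = cc n ∧ u (n + 1) = cc (n + 1) := by
      intro n
      induction n with
      | zero => exact ⟨by rw [hu0, cc_zero], by rw [hu1, cc_one]⟩
      | succ n ih =>
        refine ⟨ih.2, ?_⟩
        have hrecn := hrec (n + 1) (by omega)
        simp only [Nat.add_sub_cancel] at hrecn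
        rw [hrecn, ih.1, ih.2]
        have h := cc_rec n
        have hne : ((n:ℝ) + 1 + 1) ^ 3 ≠ 0 := by positivity
        rw [show cc (n + 1 + 1) = cc (n + 2) from rfl]
        push_cast
        rw [div_mul_eq_mul_div, div_mul_eq_mul_div, div_sub_div_same, div_eq_iff hne]
        linear_combination -h
    exact fun n => (key n).1
  have hw : ‖z ^ 2‖ < 1 := by
    rw [norm_pow]
    have h0 : (0:ℝ) ≤ ‖z‖ := norm_nonneg z
    have h1 : ‖z‖ < 1 := hz
    nlinarith
  rw [hyperF_eq, sq_eq _ hw]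
  refine tsum_congr fun n => ?_
  rw [u_eq n, pow_mul]
end

section
/- Let m be a non-negative integer and z a complex number with |z| < 1. Define a sequence (u_n) by u_0 = 1, u_1 = −4m², and for n ≥ 1, u_{n+1} = ((−8m² + 4n² − 3n + 1)/((2n+1)(n+1))) u_n − (2(n−1)(−2m+n−1)(2m+n−1)/(n(n+1)(2n+1))) u_{n-1}. Then T_m(1−2z)² = F(−m, m; 1/2; z)² = ∑_{n=0}^∞ u_n z^n, where T_m denotes the Chebyshev polynomial of the first kind of degree m. -/
open scoped Nat

section
open Polynomial Polynomial.Chebyshev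


/-- coefficient of the hypergeometric series F(-x, x; 1/2; z) -/
noncomputable def tc (x : ℂ) (k : ℕ) : ℂ :=
  (ascPochhammer ℂ k).eval (-x) * (ascPochhammer ℂ k).eval x /
    ((ascPochhammer ℂ k).eval (1 / 2 : ℂ) * (k ! : ℂ))

lemma nat_add_half_ne (j : ℕ) : ((j : ℂ) + 1 / 2) ≠ 0 := by
  intro h
  have h2 : ((2 * j + 1 : ℕ) : ℂ) = 0 := by push_cast; linear_combination 2 * h
  exact absurd (Nat.cast_eq_zero.mp h2) (by omega)

lemma nat_add_one_ne (j : ℕ) : ((j : ℂ) + 1) ≠ 0 := by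
  intro h
  have h2 : ((j + 1 : ℕ) : ℂ) = 0 := by push_cast; linear_combination h
  exact absurd (Nat.cast_eq_zero.mp h2) (by omega)

lemma asc_half_ne (k : ℕ) : (ascPochhammer ℂ k).eval (1 / 2 : ℂ) ≠ 0 := by
  induction k with
  | zero => simp
  | succ n ih =>
    rw [ascPochhammer_succ_right]
    simp only [eval_mul, eval_add, eval_X, eval_natCast]
    exact mul_ne_zero ih (by simpa [add_comm] using nat_add_half_ne n)

lemma fac_ne (k : ℕ) : ((k ! : ℕ) : ℂ) ≠ 0 :=
  Nat.cast_ne_zero.mpr (Nat.factorial_ne_zero k)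

lemma tc_zero (x : ℂ) : tc x 0 = 1 := by simp [tc]

lemma tc_succ (x : ℂ) (k : ℕ) :
    tc x (k + 1) = ((k : ℂ) ^ 2 - x ^ 2) / (((k : ℂ) + 1) * ((k : ℂ) + 1 / 2)) * tc x k := by
  unfold tc
  rw [ascPochhammer_succ_right]
  simp only [eval_mul, eval_add, eval_X, eval_natCast, Nat.factorial_succ, Nat.cast_mul]
  have h1 := asc_half_ne k
  have h2 := fac_ne k
  have h3 := nat_add_one_ne k
  have h4 := nat_add_half_ne k
  have h5 : (2 * (k : ℂ) + 1) ≠ 0 := by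
    intro hh; apply h4; linear_combination hh / 2
  field_simp
  push_cast
  ring


lemma T_ode (n : ℤ) :
    (1 - X ^ 2) * derivative (derivative (T ℂ n))
      = X * derivative (T ℂ n) - (n : ℂ[X]) ^ 2 * T ℂ n := by
  have h0 := one_sub_X_sq_mul_derivative_T_eq_poly_in_T (R := ℂ) (n - 1)
  have e : n - 1 + 1 = n := by ring
  rw [e] at h0
  have h1 := congr_arg derivative h0
  simp only [derivative_mul, derivative_sub, derivative_one, derivative_X_pow, derivative_X,
    zero_sub, mul_one, pow_one, derivative_intCast, derivative_add, Nat.cast_ofNat, map_ofNat,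
    derivative_one] at h1
  have h2 := T_derivative_eq_U (R := ℂ) n
  have h3 := T_derivative_eq_U (R := ℂ) (n - 1)
  have e4 : n - 1 - 1 = n - 2 := by ring
  rw [e4] at h3
  have h4 := U_add_two ℂ (n - 2)
  have e2 : n - 2 + 2 = n := by ring
  have e3 : n - 2 + 1 = n - 1 := by ring
  rw [e2, e3] at h4
  have h5 := T_eq_U_sub_X_mul_U ℂ n
  linear_combination (norm := (push_cast; ring_nf))
    h1 + ((1 : ℂ[X]) - (n : ℂ[X])) * X * h2 + (n : ℂ[X]) * h3
      + (n : ℂ[X]) * ((n : ℂ[X]) - 1) * h4 + (n : ℂ[X]) * ((n : ℂ[X]) - 1) * h5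


lemma p_ode (n : ℤ) :
    X * derivative (derivative ((T ℂ n).comp (1 - 2 * X)))
      - X ^ 2 * derivative (derivative ((T ℂ n).comp (1 - 2 * X)))
      + C (1 / 2 : ℂ) * derivative ((T ℂ n).comp (1 - 2 * X))
      - X * derivative ((T ℂ n).comp (1 - 2 * X))
      + (n : ℂ[X]) ^ 2 * (T ℂ n).comp (1 - 2 * X) = 0 := by
  have hq : derivative ((1 : ℂ[X]) - 2 * X) = -2 := by
    simp [derivative_sub, derivative_mul, derivative_X]
  have hp1 : derivative ((T ℂ n).comp (1 - 2 * X))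
      = (derivative (T ℂ n)).comp (1 - 2 * X) * (-2) := by
    rw [derivative_comp, hq]; ring
  have hp2 : derivative (derivative ((T ℂ n).comp (1 - 2 * X)))
      = (derivative (derivative (T ℂ n))).comp (1 - 2 * X) * 4 := by
    rw [hp1, derivative_mul, derivative_comp, hq]
    simp
    ring
  have hc := congr_arg (fun r => r.comp ((1 : ℂ[X]) - 2 * X)) (T_ode n)
  simp only [sub_comp, mul_comp, one_comp, pow_comp, X_comp, intCast_comp] at hc
  have hCC : (2 : ℂ[X]) * C (1 / 2 : ℂ) = 1 := by
    have : ((2 : ℂ[X])) = C (2 : ℂ) := by simp [map_ofNat]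
    rw [this, ← Polynomial.C_mul]
    norm_num
  rw [hp2, hp1]
  linear_combination hc - ((derivative (T ℂ n)).comp (1 - 2 * X)) * hCC


lemma coeff_rec (p : ℂ[X]) (w : ℂ)
    (h : X * derivative (derivative p) - X ^ 2 * derivative (derivative p)
      + C (1 / 2 : ℂ) * derivative p - X * derivative p + C w ^ 2 * p = 0) (k : ℕ) :
    ((k : ℂ) + 1) * ((k : ℂ) + 1 / 2) * p.coeff (k + 1)
      = ((k : ℂ) ^ 2 - w ^ 2) * p.coeff k := by
  rw [pow_two, mul_assoc, ← map_pow] at h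
  match k with
  | 0 =>
    have h0 := congr_arg (fun q => Polynomial.coeff q 0) h
    simp only [coeff_add, coeff_sub, coeff_zero, coeff_C_mul, mul_coeff_zero, coeff_X_zero,
      coeff_derivative, zero_mul, coeff_C_zero] at h0
    push_cast at h0 ⊢
    linear_combination h0
  | 1 =>
    have h0 := congr_arg (fun q => Polynomial.coeff q (0 + 1)) h
    simp only [coeff_add, coeff_sub, coeff_zero, coeff_C_mul, coeff_X_mul, mul_coeff_zero,
      coeff_X_zero, coeff_derivative, zero_mul, coeff_C_zero] at h0
    push_cast at h0 ⊢
    linear_combination h0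
  | (j + 2) =>
    have h0 := congr_arg (fun q => Polynomial.coeff q (j + 2)) h
    rw [show j + 2 = (j + 1) + 1 from rfl] at h0
    simp only [coeff_add, coeff_sub, coeff_zero, coeff_C_mul, coeff_X_mul,
      coeff_derivative] at h0
    simp only [show j + 1 + 1 = j + 2 from rfl, show j + 1 + 1 + 1 = j + 3 from rfl,
      show j + 2 + 1 = j + 3 from rfl] at h0 ⊢
    push_cast at h0 ⊢
    linear_combination h0


lemma coeff_T_comp (m : ℕ) (k : ℕ) :
    ((T ℂ (m : ℤ)).comp (1 - 2 * X)).coeff k = tc ((m : ℕ) : ℂ) k := by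
  set p : ℂ[X] := (T ℂ (m : ℤ)).comp (1 - 2 * X) with hp
  have h := p_ode (m : ℤ)
  have hcast : (((m : ℤ)) : ℂ[X]) = C ((m : ℕ) : ℂ) := by push_cast; simp
  rw [hcast] at h
  have hrec := coeff_rec p ((m : ℕ) : ℂ) h
  have hc0 : p.coeff 0 = 1 := by
    rw [coeff_zero_eq_eval_zero, hp, eval_comp]
    simp only [eval_sub, eval_one, eval_mul, eval_X, eval_ofNat, mul_zero, sub_zero]
    have := Polynomial.Chebyshev.T_complex_cos (0 : ℂ) (m : ℤ)
    simpa using this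
  induction k with
  | zero => rw [hc0, tc_zero]
  | succ j ih =>
    have h1 := hrec j
    have h2 := tc_succ ((m : ℕ) : ℂ) j
    have hne1 := nat_add_one_ne j
    have hne2 := nat_add_half_ne j
    rw [ih] at h1
    rw [h2, div_mul_eq_mul_div, eq_div_iff (mul_ne_zero hne1 hne2)]
    linear_combination h1

lemma tsum_tc (m : ℕ) (z : ℂ) :
    ∑' k : ℕ, tc ((m : ℕ) : ℂ) k * z ^ k = (T ℂ (m : ℤ)).eval (1 - 2 * z) := by
  set p : ℂ[X] := (T ℂ (m : ℤ)).comp (1 - 2 * X) with hp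
  have hfin : ∀ k ∉ Finset.range (p.natDegree + 1), tc ((m : ℕ) : ℂ) k * z ^ k = 0 := by
    intro k hk
    rw [← coeff_T_comp m k, ← hp, coeff_eq_zero_of_natDegree_lt, zero_mul]
    simpa [Nat.lt_succ_iff] using hk
  rw [tsum_eq_sum hfin]
  have : ∑ k ∈ Finset.range (p.natDegree + 1), tc ((m : ℕ) : ℂ) k * z ^ k
      = ∑ k ∈ Finset.range (p.natDegree + 1), p.coeff k * z ^ k := by
    refine Finset.sum_congr rfl fun k _ => ?_
    rw [← coeff_T_comp m k, ← hp]
  rw [this, ← Polynomial.eval_eq_sum_range, hp, eval_comp]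
  simp

lemma lemP (m : ℕ) (z : ℂ) :
    hyperF (-(m : ℂ)) (m : ℂ) (1 / 2) z = (T ℂ (m : ℤ)).eval (1 - 2 * z) := by
  rw [← tsum_tc m z]
  rfl


theorem squared_chebyshev_recurrence
    (m : ℕ) (z : ℂ) (hz : ‖z‖ < 1)
    (u : ℕ → ℂ)
    (hu0 : u 0 = 1)
    (hu1 : u 1 = -(4 * (m : ℂ) ^ 2))
    (hrec : ∀ n : ℕ, 1 ≤ n →
      u (n + 1) =
        ((-(8 * (m : ℂ) ^ 2) + 4 * (n : ℂ) ^ 2 - 3 * (n : ℂ) + 1) /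
          ((2 * (n : ℂ) + 1) * ((n : ℂ) + 1))) * u n
        - (2 * ((n : ℂ) - 1) * (-(2 * (m : ℂ)) + (n : ℂ) - 1) * (2 * (m : ℂ) + (n : ℂ) - 1) /
          ((n : ℂ) * ((n : ℂ) + 1) * (2 * (n : ℂ) + 1))) * u (n - 1)) :
    ((Polynomial.Chebyshev.T ℂ (m : ℤ)).eval (1 - 2 * z)) ^ 2
        = ∑' n : ℕ, u n * z ^ n ∧
    (hyperF (-(m : ℂ)) (m : ℂ) (1 / 2) z) ^ 2 = ∑' n : ℕ, u n * z ^ n := by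
  set x : ℂ := ((2 * m : ℕ) : ℂ) with hx
  set c : ℕ → ℂ := fun n => tc x n / 2 + if n = 0 then 1 / 2 else 0 with hc
  -- u agrees with c
  have key : ∀ n : ℕ, u n = c n ∧ u (n + 1) = c (n + 1) := by
    intro n
    induction n with
    | zero =>
      constructor
      · rw [hu0]; simp [hc, tc_zero]; norm_num
      · rw [hu1]; simp only [hc]
        rw [show tc x 1 = tc x (0 + 1) from rfl, tc_succ, tc_zero, hx]
        push_cast
        norm_num
        ring
    | succ n ih =>
      refine ⟨ih.2, ?_⟩
      have h := hrec (n + 1) (by omega)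
      rw [Nat.add_sub_cancel] at h
      rw [ih.1, ih.2] at h
      rw [h]
      match n with
      | 0 =>
        have t1 : tc x 1 = ((0 : ℂ) ^ 2 - x ^ 2) / (((0 : ℂ) + 1) * ((0 : ℂ) + 1 / 2)) * 1 := by
          rw [show tc x 1 = tc x (0 + 1) from rfl, tc_succ, tc_zero]; norm_num
        have t2 : tc x 2 = ((1 : ℂ) ^ 2 - x ^ 2) / (((1 : ℂ) + 1) * ((1 : ℂ) + 1 / 2)) * tc x 1 := by
          rw [show tc x 2 = tc x (1 + 1) from rfl, tc_succ]; norm_num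
        simp only [hc]
        norm_num
        rw [t2, t1, hx]
        push_cast
        field_simp
        ring
      | (j + 1) =>
        simp only [hc]
        rw [if_neg (by omega : ¬(j + 1 + 1 + 1 = 0)), if_neg (by omega : ¬(j + 1 + 1 = 0)),
          if_neg (by omega : ¬(j + 1 = 0))]
        have h1 := tc_succ x (j + 1)
        have h2 := tc_succ x (j + 1 + 1)
        have hx2 : x ^ 2 = (2 * (m : ℂ)) ^ 2 := by rw [hx]; push_cast; ring
        rw [hx2] at h1 h2
        push_cast at h1 h2 ⊢
        rw [h2, h1]
        have n2 : ((j : ℂ) + 2) ≠ 0 := by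
          intro hcon
          have : ((j + 2 : ℕ) : ℂ) = 0 := by push_cast; linear_combination hcon
          exact absurd (Nat.cast_eq_zero.mp this) (by omega)
        have n3 : ((j : ℂ) + 3) ≠ 0 := by
          intro hcon
          have : ((j + 3 : ℕ) : ℂ) = 0 := by push_cast; linear_combination hcon
          exact absurd (Nat.cast_eq_zero.mp this) (by omega)
        have n4 : (2 * (j : ℂ) + 3) ≠ 0 := by
          intro hcon
          have : ((2 * j + 3 : ℕ) : ℂ) = 0 := by push_cast; linear_combination hcon
          exact absurd (Nat.cast_eq_zero.mp this) (by omega)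
        have n5 : (2 * (j : ℂ) + 5) ≠ 0 := by
          intro hcon
          have : ((2 * j + 5 : ℕ) : ℂ) = 0 := by push_cast; linear_combination hcon
          exact absurd (Nat.cast_eq_zero.mp this) (by omega)
        have scalar :
            ((-(8 * (m : ℂ) ^ 2) + 4 * ((j : ℂ) + 2) ^ 2 - 3 * ((j : ℂ) + 2) + 1) /
                ((2 * ((j : ℂ) + 2) + 1) * (((j : ℂ) + 2) + 1))) *
              ((((j : ℂ) + 1) ^ 2 - (2 * (m : ℂ)) ^ 2) /
                ((((j : ℂ) + 1) + 1) * (((j : ℂ) + 1) + 1 / 2)))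
            - (2 * (((j : ℂ) + 2) - 1) * (-(2 * (m : ℂ)) + ((j : ℂ) + 2) - 1) *
                (2 * (m : ℂ) + ((j : ℂ) + 2) - 1) /
                (((j : ℂ) + 2) * (((j : ℂ) + 2) + 1) * (2 * ((j : ℂ) + 2) + 1)))
            = ((((j : ℂ) + 2) ^ 2 - (2 * (m : ℂ)) ^ 2) /
                ((((j : ℂ) + 2) + 1) * (((j : ℂ) + 2) + 1 / 2))) *
              ((((j : ℂ) + 1) ^ 2 - (2 * (m : ℂ)) ^ 2) /
                ((((j : ℂ) + 1) + 1) * (((j : ℂ) + 1) + 1 / 2))) := by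
          have e1 : (((j : ℂ) + 1) + 1) = ((j : ℂ) + 2) := by ring
          have e2 : (((j : ℂ) + 2) + 1) = ((j : ℂ) + 3) := by ring
          have e3 : (2 * ((j : ℂ) + 2) + 1) = (2 * (j : ℂ) + 5) := by ring
          have e4 : (((j : ℂ) + 1) + 1 / 2) = (2 * (j : ℂ) + 3) / 2 := by ring
          have e5 : (((j : ℂ) + 2) + 1 / 2) = (2 * (j : ℂ) + 5) / 2 := by ring
          rw [e1, e2, e3, e4, e5]
          have n4' : ((j : ℂ) * 2 + 3) ≠ 0 := by rw [mul_comm]; exact n4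
          have n5' : ((j : ℂ) * 2 + 5) ≠ 0 := by rw [mul_comm]; exact n5
          field_simp
          ring
        linear_combination (tc x (j + 1) / 2) * scalar
  -- the tsum
  set P2 : ℂ[X] := (T ℂ ((2 * m : ℕ) : ℤ)).comp (1 - 2 * X) with hP2
  have hsum : ∑' n : ℕ, u n * z ^ n = ((T ℂ ((2 * m : ℕ) : ℤ)).eval (1 - 2 * z) + 1) / 2 := by
    have hfin : ∀ k ∉ Finset.range (P2.natDegree + 1), u k * z ^ k = 0 := by
      intro k hk
      rw [Finset.mem_range, not_lt] at hk
      have hk0 : k ≠ 0 := by omega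
      have : u k = c k := (key k).1
      rw [this]
      simp only [hc, if_neg hk0, add_zero]
      rw [← coeff_T_comp (2 * m) k, ← hP2, coeff_eq_zero_of_natDegree_lt (by omega)]
      simp
    rw [tsum_eq_sum hfin]
    have hstep : ∀ k ∈ Finset.range (P2.natDegree + 1),
        u k * z ^ k = P2.coeff k * z ^ k / 2 + (if k = 0 then (1:ℂ)/2 else 0) * z ^ k := by
      intro k _
      rw [(key k).1]
      simp only [hc]
      rw [← coeff_T_comp (2 * m) k, ← hP2]
      ring
    rw [Finset.sum_congr rfl hstep, Finset.sum_add_distrib]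
    have hA : ∑ k ∈ Finset.range (P2.natDegree + 1), P2.coeff k * z ^ k / 2
        = ((T ℂ ((2 * m : ℕ) : ℤ)).eval (1 - 2 * z)) / 2 := by
      rw [← Finset.sum_div, ← Polynomial.eval_eq_sum_range, hP2, eval_comp]
      simp
    have hB : ∑ k ∈ Finset.range (P2.natDegree + 1), (if k = 0 then (1:ℂ)/2 else 0) * z ^ k
        = 1 / 2 := by
      rw [Finset.sum_eq_single_of_mem 0 (Finset.mem_range.mpr (by omega))]
      · simp
      · intro b _ hb; simp [hb]
    rw [hA, hB]
    ring
  -- Chebyshev squaring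
  have hsq : ((T ℂ (m : ℤ)).eval (1 - 2 * z)) ^ 2
      = ((T ℂ ((2 * m : ℕ) : ℤ)).eval (1 - 2 * z) + 1) / 2 := by
    have hm := Polynomial.Chebyshev.T_mul_T ℂ (m : ℤ) (m : ℤ)
    have e : (m : ℤ) + (m : ℤ) = ((2 * m : ℕ) : ℤ) := by push_cast; ring
    rw [e, sub_self, T_zero] at hm
    have := congr_arg (Polynomial.eval (1 - 2 * z)) hm
    simp only [eval_mul, eval_add, eval_one, eval_ofNat] at this
    linear_combination this / 2
  constructor
  · rw [hsum, hsq]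
  · rw [lemP m z, hsum, hsq]

end
end

section
/- Let a, b, c, z be complex numbers with |z| < 1, such that c is not zero or a negative integer, 2c + n − 1 ≠ 0 for all integers n ≥ 1, and 3c + n − 2 ≠ 0 for all integers n ≥ 1. Define a sequence (v_n) by v_0 = 1, v_1 = 3ab/c, v_2 = 3a²b²/c² + 3a(a+1)b(b+1)/(2c(c+1)), and for n ≥ 2, v_{n+1} = β_0(n) v_n + β_1(n) v_{n-1} + β_2(n) v_{n-2}, where, with D(n) = (n+1)(c+n)(2c+n−1)(3c+n−2): β_0(n) = (3n⁴ + 6(a+b+2c−2)n³ + (2a(5b+11c−9) + 11c(2b+c) − 18b − 26c + 15)n² + (c²(18a+18b−7) + c(a(30b−29) − 29b + 13) + 4a(3−5b) + 12b − 6)n + 3ab(c(6c−7)+2)) / D(n); β_1(n) = −(3n⁴ + 6(2a+2b+c−3)n³ + (11a² + 42ab + 22ac − 54a + 11b² + 22bc − 54b − 22c + 40)n² + 3(10a²b + 6a²c − 11a² + 10ab² + 22abc − 42ab − 17ac + 26a + 6b²c − 11b² − 17bc + 26b + 9c − 13)n + 9a²b² + 36a²bc − 45a²b − 18a²c + 22a²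 + 36ab²c − 45ab² − 72abc + 87ab + 29ac − 36a − 18b²c + 22b² + 29bc − 36b − 11c + 14) / D(n); β_2(n) = (3a+n−2)(3b+n−2)(2a+b+n−2)(a+2b+n−2) / D(n). Then F(a,b;c;z)³ = ∑_{n=0}^∞ v_n z^n. -/
open scoped Nat
open PowerSeries Filter Topology

/-- coefficient of the hypergeometric series -/
noncomputable def tcHG (a b c : ℂ) (k : ℕ) : ℂ :=
  (ascPochhammer ℂ k).eval a * (ascPochhammer ℂ k).eval b /
    ((ascPochhammer ℂ k).eval c * (k ! : ℂ))

lemma tcHG_zero (a b c : ℂ) : tcHG a b c 0 = 1 := by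
  simp [tcHG]

lemma pochc_ne (c : ℂ) (hc : ∀ k : ℕ, c + (k : ℂ) ≠ 0) (k : ℕ) :
    (ascPochhammer ℂ k).eval c ≠ 0 := by
  induction k with
  | zero => simp
  | succ m ih =>
    rw [ascPochhammer_succ_eval]
    exact mul_ne_zero ih (by simpa [add_comm] using hc m)

lemma tcHG_rec (a b c : ℂ) (hc : ∀ k : ℕ, c + (k : ℂ) ≠ 0) (k : ℕ) :
    ((k : ℂ) + 1) * (c + (k : ℂ)) * tcHG a b c (k + 1)
      = (a + (k : ℂ)) * (b + (k : ℂ)) * tcHG a b c k := by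
  have hpc := pochc_ne c hc k
  have hpc' := pochc_ne c hc (k+1)
  have hfac : ((k ! : ℕ) : ℂ) ≠ 0 := Nat.cast_ne_zero.mpr (Nat.factorial_ne_zero k)
  have hfac' : (((k+1) ! : ℕ) : ℂ) ≠ 0 := Nat.cast_ne_zero.mpr (Nat.factorial_ne_zero (k+1))
  have hk1 : ((k : ℂ) + 1) ≠ 0 := by
    have : ((k:ℂ)+1) = ((k+1 : ℕ) : ℂ) := by norm_cast
    rw [this]
    exact Nat.cast_ne_zero.mpr (Nat.succ_ne_zero k)
  have hck : (c + (k : ℂ)) ≠ 0 := hc k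
  have e1 : tcHG a b c (k+1)
      = ((a + (k:ℂ)) * (b + (k:ℂ))) / ((((k:ℂ))+1) * (c + (k:ℂ))) * tcHG a b c k := by
    simp only [tcHG, ascPochhammer_succ_eval, Nat.factorial_succ, Nat.cast_mul,
      Nat.cast_add, Nat.cast_one]
    rw [div_mul_div_comm, div_eq_div_iff (by
      exact mul_ne_zero (mul_ne_zero hpc hck) (mul_ne_zero hk1 hfac))
      (mul_ne_zero (mul_ne_zero hk1 hck) (mul_ne_zero hpc hfac))]
    ring
  rw [e1]
  field_simp

/-- the hypergeometric formal power series -/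
noncomputable def fHG (a b c : ℂ) : ℂ⟦X⟧ := PowerSeries.mk (tcHG a b c)

lemma fHG_ode (a b c : ℂ) (hc : ∀ k : ℕ, c + (k : ℂ) ≠ 0) :
    ((X : ℂ⟦X⟧) - X^2) * (derivative ℂ (derivative ℂ (fHG a b c)))
      = C a * C b * fHG a b c
        + ((C a + C b + 1) * X - C c) * derivative ℂ (fHG a b c) := by
  have key : (X : ℂ⟦X⟧) * (derivative ℂ (derivative ℂ (fHG a b c)))
      - X * (X * (derivative ℂ (derivative ℂ (fHG a b c))))
      = C a * (C b * fHG a b c)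
        + (C a * (X * derivative ℂ (fHG a b c))
          + C b * (X * derivative ℂ (fHG a b c)) + X * derivative ℂ (fHG a b c))
        - C c * derivative ℂ (fHG a b c) := by
    ext p
    simp only [map_sub, map_add, coeff_C_mul, fHG]
    rcases p with _ | p
    · simp only [coeff_zero_X_mul, coeff_derivative, coeff_mk, mul_zero, tcHG_zero]
      have h0 := tcHG_rec a b c hc 0
      simp only [Nat.cast_zero, zero_add, add_zero, tcHG_zero, mul_one] at h0
      push_cast
      linear_combination h0
    rcases p with _ | m
    · simp only [coeff_succ_X_mul, coeff_zero_X_mul, coeff_derivative, coeff_mk]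
      have h1 := tcHG_rec a b c hc 1
      push_cast at h1 ⊢
      linear_combination h1
    · simp only [coeff_succ_X_mul, coeff_derivative, coeff_mk]
      have h2 := tcHG_rec a b c hc (m + 2)
      push_cast at h2 ⊢
      linear_combination h2
  linear_combination key

lemma tcHG_div (a b c : ℂ) (hc : ∀ k : ℕ, c + (k : ℂ) ≠ 0) (k : ℕ) :
    tcHG a b c (k + 1)
      = (a + (k : ℂ)) * (b + (k : ℂ)) / (((k : ℂ) + 1) * (c + (k : ℂ))) * tcHG a b c k := by
  have hk1 : ((k : ℂ) + 1) ≠ 0 := by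
    have : ((k:ℂ)+1) = ((k+1 : ℕ) : ℂ) := by norm_cast
    rw [this]; exact Nat.cast_ne_zero.mpr (Nat.succ_ne_zero k)
  rw [div_mul_eq_mul_div, eq_div_iff (mul_ne_zero hk1 (hc k))]
  linear_combination tcHG_rec a b c hc k

lemma tcHG_summable (a b c z : ℂ) (hc : ∀ k : ℕ, c + (k : ℂ) ≠ 0)
    (hz : ‖z‖ < 1) :
    Summable (fun k : ℕ => ‖tcHG a b c k * z ^ k‖) := by
  by_cases hz0 : z = 0
  · apply summable_of_ne_finset_zero (s := {0})
    intro k hk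
    have hk0 : k ≠ 0 := by simpa using hk
    simp [hz0, zero_pow hk0]
  by_cases hvan : ∃ K, tcHG a b c K = 0
  · obtain ⟨K, hK⟩ := hvan
    apply summable_of_ne_finset_zero (s := Finset.range (K + 1))
    intro k hk
    have hkK : K ≤ k := by simp only [Finset.mem_range, not_lt] at hk; omega
    have hzero : ∀ j, tcHG a b c (K + j) = 0 := by
      intro j
      induction j with
      | zero => simpa using hK
      | succ i ih => rw [← Nat.add_assoc, tcHG_div a b c hc (K + i), ih, mul_zero]
    obtain ⟨j, rfl⟩ := Nat.exists_eq_add_of_le hkK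
    simp [hzero j]
  · push_neg at hvan
    -- ratio test
    have hr : Tendsto (fun k : ℕ =>
        (a + (k : ℂ)) * (b + (k : ℂ)) / (((k : ℂ) + 1) * (c + (k : ℂ)))) atTop (𝓝 1) := by
      have h1 : Tendsto (fun k : ℕ => (a + (k : ℂ)) / ((k : ℂ) + 1)) atTop (𝓝 1) := by
        have hbase : Tendsto (fun k : ℕ => ((k : ℂ) + 1)⁻¹) atTop (𝓝 0) := by
          rw [tendsto_zero_iff_norm_tendsto_zero]
          have : (fun k : ℕ => ‖((k : ℂ) + 1)⁻¹‖) = fun k : ℕ => 1 / ((k : ℝ) + 1) := by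
            funext k
            rw [norm_inv, one_div]
            congr 1
            have : ((k : ℂ) + 1) = ((k + 1 : ℕ) : ℂ) := by norm_cast
            rw [this, Complex.norm_natCast]
            push_cast; ring
          rw [this]
          exact tendsto_one_div_add_atTop_nhds_zero_nat
        have := (hbase.const_mul (a - 1)).const_add 1
        simp only [mul_zero, add_zero] at this
        apply this.congr
        intro k
        have hk1 : ((k : ℂ) + 1) ≠ 0 := by
          have h' : ((k:ℂ)+1) = ((k+1 : ℕ) : ℂ) := by norm_cast
          rw [h']; exact Nat.cast_ne_zero.mpr (Nat.succ_ne_zero k)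
        field_simp
        ring
      have h2 : Tendsto (fun k : ℕ => (b + (k : ℂ)) / (c + (k : ℂ))) atTop (𝓝 1) := by
        have hbase : Tendsto (fun k : ℕ => (c + (k : ℂ))⁻¹) atTop (𝓝 0) := by
          rw [tendsto_zero_iff_norm_tendsto_zero]
          simp only [norm_inv]
          apply Filter.Tendsto.inv_tendsto_atTop
          apply tendsto_atTop_mono' atTop
            (f₁ := fun k : ℕ => (k : ℝ) - ‖c‖)
          · filter_upwards [Filter.eventually_ge_atTop 0] with k _
            have h2 : ‖(k : ℂ)‖ ≤ ‖c + (k : ℂ)‖ + ‖c‖ := by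
              simpa using norm_add_le (c + (k : ℂ)) (-c)
            have h3 : ‖(k : ℂ)‖ = (k : ℝ) := Complex.norm_natCast k
            linarith
          · exact tendsto_atTop_add_const_right atTop (-‖c‖)
              (tendsto_natCast_atTop_atTop)
        have := (hbase.const_mul (b - c)).const_add 1
        simp only [mul_zero, add_zero] at this
        apply this.congr
        intro k
        have hck := hc k
        field_simp
        ring
      have := h1.mul h2
      rw [mul_one] at this
      apply this.congr
      intro k
      rw [div_mul_div_comm]
    have hrn : Tendsto (fun k : ℕ =>
        ‖(a + (k : ℂ)) * (b + (k : ℂ)) / (((k : ℂ) + 1) * (c + (k : ℂ)))‖ * ‖z‖) atTop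
        (𝓝 (‖z‖)) := by
      have := (hr.norm).mul_const ‖z‖
      simpa using this
    apply summable_of_ratio_test_tendsto_lt_one hz
    · filter_upwards with k
      have ht := hvan k
      have hzk : z ^ k ≠ 0 := pow_ne_zero _ hz0
      simp only [ne_eq, norm_eq_zero]
      exact mul_ne_zero ht hzk
    · apply hrn.congr
      intro k
      have ht := hvan k
      have hzk : z ^ k ≠ 0 := pow_ne_zero _ hz0
      have hne : ‖tcHG a b c k * z ^ k‖ ≠ 0 :=
        norm_ne_zero_iff.mpr (mul_ne_zero ht hzk)
      rw [tcHG_div a b c hc k]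
      rw [Real.norm_of_nonneg (norm_nonneg _), Real.norm_of_nonneg (norm_nonneg _)]
      rw [pow_succ]
      rw [show (a + (k : ℂ)) * (b + (k : ℂ)) / (((k : ℂ) + 1) * (c + (k : ℂ))) * tcHG a b c k
            * (z ^ k * z)
          = ((a + (k : ℂ)) * (b + (k : ℂ)) / (((k : ℂ) + 1) * (c + (k : ℂ))) * z)
            * (tcHG a b c k * z ^ k) by ring]
      rw [norm_mul ((a + (k : ℂ)) * (b + (k : ℂ)) / (((k : ℂ) + 1) * (c + (k : ℂ))) * z)
        (tcHG a b c k * z ^ k)]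
      rw [mul_div_cancel_right₀ _ hne]
      exact (norm_mul _ _).symm

lemma cube_tsum (a b c z : ℂ) (hc : ∀ k : ℕ, c + (k : ℂ) ≠ 0)
    (hz : ‖z‖ < 1) :
    (∑' k : ℕ, tcHG a b c k * z ^ k) ^ 3
      = ∑' n : ℕ, (PowerSeries.coeff n ((fHG a b c) ^ 3)) * z ^ n := by
  set u : ℕ → ℂ := fun k => tcHG a b c k * z ^ k with hu
  have hnorm : Summable fun k => ‖u k‖ := tcHG_summable a b c z hc hz
  have h2 : (∑' k, u k) * (∑' k, u k)
      = ∑' n, ∑ kl ∈ Finset.HasAntidiagonal.antidiagonal n, u kl.1 * u kl.2 :=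
    tsum_mul_tsum_eq_tsum_sum_antidiagonal_of_summable_norm hnorm hnorm
  have hS2norm : Summable fun n => ‖∑ kl ∈ Finset.HasAntidiagonal.antidiagonal n, u kl.1 * u kl.2‖ :=
    summable_norm_sum_mul_antidiagonal_of_summable_norm hnorm hnorm
  have h3 : (∑' k, u k) * (∑' n, ∑ kl ∈ Finset.HasAntidiagonal.antidiagonal n, u kl.1 * u kl.2)
      = ∑' n, ∑ kl ∈ Finset.HasAntidiagonal.antidiagonal n,
          u kl.1 * (∑ ij ∈ Finset.HasAntidiagonal.antidiagonal kl.2, u ij.1 * u ij.2) :=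
    tsum_mul_tsum_eq_tsum_sum_antidiagonal_of_summable_norm hnorm hS2norm
  have hS2 : ∀ m : ℕ, ∑ ij ∈ Finset.HasAntidiagonal.antidiagonal m, u ij.1 * u ij.2
      = (PowerSeries.coeff m ((fHG a b c) * (fHG a b c))) * z ^ m := by
    intro m
    rw [PowerSeries.coeff_mul, Finset.sum_mul]
    apply Finset.sum_congr rfl
    intro ij hij
    have hm : ij.1 + ij.2 = m := Finset.HasAntidiagonal.mem_antidiagonal.mp hij
    simp only [hu, fHG, coeff_mk]
    rw [← hm, pow_add]
    ring
  have hfinal : ∀ n : ℕ, ∑ kl ∈ Finset.HasAntidiagonal.antidiagonal n,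
        u kl.1 * (∑ ij ∈ Finset.HasAntidiagonal.antidiagonal kl.2, u ij.1 * u ij.2)
      = (PowerSeries.coeff n ((fHG a b c) ^ 3)) * z ^ n := by
    intro n
    have hcube : (fHG a b c) ^ 3 = (fHG a b c) * ((fHG a b c) * (fHG a b c)) := by ring
    rw [hcube, PowerSeries.coeff_mul, Finset.sum_mul]
    apply Finset.sum_congr rfl
    intro kl hkl
    have hn : kl.1 + kl.2 = n := Finset.HasAntidiagonal.mem_antidiagonal.mp hkl
    rw [hS2 kl.2]
    simp only [hu, fHG, coeff_mk]
    rw [← hn, pow_add]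
    ring
  calc (∑' k, u k) ^ 3 = (∑' k, u k) * ((∑' k, u k) * (∑' k, u k)) := by ring
    _ = ∑' n, (PowerSeries.coeff n ((fHG a b c) ^ 3)) * z ^ n := by
        rw [h2, h3]
        exact tsum_congr hfinal

lemma coeff_cube_zero (a b c : ℂ) :
    PowerSeries.coeff 0 ((fHG a b c) ^ 3) = 1 := by
  rw [PowerSeries.coeff_zero_eq_constantCoeff, map_pow]
  have h0 : constantCoeff (fHG a b c) = 1 := by
    simp [fHG, tcHG, constantCoeff_mk]
  rw [h0, one_pow]

lemma coeff_cube_one (a b c : ℂ) :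
    PowerSeries.coeff 1 ((fHG a b c) ^ 3) = 3 * a * b / c := by
  have h1 : tcHG a b c 1 = a * b / c := by
    simp [tcHG, ascPochhammer_one]
  have h0 : tcHG a b c 0 = 1 := by simp [tcHG]
  have hcube : (fHG a b c) ^ 3 = (fHG a b c) * ((fHG a b c) * (fHG a b c)) := by ring
  rw [hcube, PowerSeries.coeff_mul, Finset.Nat.sum_antidiagonal_eq_sum_range_succ_mk]
  simp only [PowerSeries.coeff_mul, Finset.Nat.sum_antidiagonal_eq_sum_range_succ_mk]
  simp [Finset.sum_range_succ, fHG, coeff_mk, h0, h1]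
  ring

lemma coeff_cube_two (a b c : ℂ) :
    PowerSeries.coeff 2 ((fHG a b c) ^ 3)
      = 3 * a ^ 2 * b ^ 2 / c ^ 2
        + 3 * a * (a + 1) * b * (b + 1) / (2 * c * (c + 1)) := by
  have h0 : tcHG a b c 0 = 1 := by simp [tcHG]
  have h1 : tcHG a b c 1 = a * b / c := by
    simp [tcHG, ascPochhammer_one]
  have h2 : tcHG a b c 2 = (a * (a + 1)) * (b * (b + 1)) / ((c * (c + 1)) * 2) := by
    simp only [tcHG, ascPochhammer_succ_eval, ascPochhammer_zero, Polynomial.eval_one]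
    norm_num
  have hcube : (fHG a b c) ^ 3 = (fHG a b c) * ((fHG a b c) * (fHG a b c)) := by ring
  rw [hcube, PowerSeries.coeff_mul, Finset.Nat.sum_antidiagonal_eq_sum_range_succ_mk]
  simp only [PowerSeries.coeff_mul, Finset.Nat.sum_antidiagonal_eq_sum_range_succ_mk]
  simp [Finset.sum_range_succ, fHG, coeff_mk, h0, h1, h2]
  field_simp
  ring

set_option maxHeartbeats 2000000 in
lemma wrec (a b c : ℂ) (hc : ∀ k : ℕ, c + (k : ℂ) ≠ 0) (n : ℕ) (hn : 2 ≤ n) :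
    (((n : ℂ) + 1) * (c + (n : ℂ)) * (2 * c + (n : ℂ) - 1) * (3 * c + (n : ℂ) - 2))
        * PowerSeries.coeff (n + 1) ((fHG a b c) ^ 3)
      = (3 * (n : ℂ) ^ 4 + 6 * (a + b + 2 * c - 2) * (n : ℂ) ^ 3
            + (2 * a * (5 * b + 11 * c - 9) + 11 * c * (2 * b + c) - 18 * b - 26 * c + 15)
              * (n : ℂ) ^ 2
            + (c ^ 2 * (18 * a + 18 * b - 7) + c * (a * (30 * b - 29) - 29 * b + 13)
              + 4 * a * (3 - 5 * b) + 12 * b - 6) * (n : ℂ)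
            + 3 * a * b * (c * (6 * c - 7) + 2)) * PowerSeries.coeff n ((fHG a b c) ^ 3)
      + (-(3 * (n : ℂ) ^ 4 + 6 * (2 * a + 2 * b + c - 3) * (n : ℂ) ^ 3
            + (11 * a ^ 2 + 42 * a * b + 22 * a * c - 54 * a + 11 * b ^ 2 + 22 * b * c
              - 54 * b - 22 * c + 40) * (n : ℂ) ^ 2
            + 3 * (10 * a ^ 2 * b + 6 * a ^ 2 * c - 11 * a ^ 2 + 10 * a * b ^ 2
              + 22 * a * b * c - 42 * a * b - 17 * a * c + 26 * a + 6 * b ^ 2 * c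
              - 11 * b ^ 2 - 17 * b * c + 26 * b + 9 * c - 13) * (n : ℂ)
            + 9 * a ^ 2 * b ^ 2 + 36 * a ^ 2 * b * c - 45 * a ^ 2 * b - 18 * a ^ 2 * c
              + 22 * a ^ 2 + 36 * a * b ^ 2 * c - 45 * a * b ^ 2 - 72 * a * b * c
              + 87 * a * b + 29 * a * c - 36 * a - 18 * b ^ 2 * c + 22 * b ^ 2
              + 29 * b * c - 36 * b - 11 * c + 14)) * PowerSeries.coeff (n - 1) ((fHG a b c) ^ 3)
      + ((3 * a + (n : ℂ) - 2) * (3 * b + (n : ℂ) - 2) * (2 * a + b + (n : ℂ) - 2)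
            * (a + 2 * b + (n : ℂ) - 2)) * PowerSeries.coeff (n - 2) ((fHG a b c) ^ 3) := by
  obtain ⟨m, rfl⟩ : ∃ m, n = m + 2 := ⟨n - 2, by omega⟩
  have i1 : m + 2 - 1 = m + 1 := by omega
  have i2 : m + 2 - 2 = m := by omega
  rw [i1, i2]
  set F0 := fHG a b c with hF0
  set F1 := derivative ℂ F0 with hF1
  set F2 := derivative ℂ F1 with hF2
  set F3 := derivative ℂ F2 with hF3
  set F4 := derivative ℂ F3 with hF4
  set Y := F0 ^ 3 with hYdef
  set T1 := X * derivative ℂ Y with hT1def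
  set T2 := X * derivative ℂ T1 with hT2def
  set T3 := X * derivative ℂ T2 with hT3def
  set T4 := X * derivative ℂ T3 with hT4def
  have dmul : ∀ f g : ℂ⟦X⟧, derivative ℂ (f * g)
      = f * derivative ℂ g + g * derivative ℂ f := fun f g => by
    rw [Derivation.leibniz]; simp [smul_eq_mul]
  have dpow3 : ∀ g : ℂ⟦X⟧, derivative ℂ (g ^ 3) = C 3 * g ^ 2 * derivative ℂ g := fun g => by
    rw [pow_succ, pow_two]
    simp only [dmul]
    linear_combination (norm := (simp only [map_add, map_mul, map_pow, map_ofNat, map_neg, map_sub, map_one]; ring1))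
  have hE : ((X : ℂ⟦X⟧) - X ^ 2) * F2 = (C (1*a + 1*b + 1)*X*F1
      + C (1*a*b)*F0
      + C ((-1)*c)*F1) := by
    have h0 := fHG_ode a b c hc
    rw [← hF0, ← hF1, ← hF2] at h0
    linear_combination (norm := (simp only [map_add, map_mul, map_pow, map_ofNat, map_neg, map_sub, map_one]; ring1)) h0
  have hd := congrArg (⇑(derivative ℂ)) hE
  simp only [map_sub, map_add, dmul, derivative_X, derivative_C, pow_two,
    ← hF1, ← hF2, ← hF3, ← hF4] at hd
  have hE3 : ((X : ℂ⟦X⟧) - X ^ 2) ^ 2 * F3 = (C (1*a^2 + 1*a*b + 3*a + 1*b^2 + 3*b + 2)*X^2*F1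
      + C (1*a^2*b + 1*a*b^2 + 3*a*b)*X*F0
      + C (1*a*b + (-2)*a*c + (-2)*b*c + (-4)*c)*X*F1
      + C ((-1)*a*b*c + (-1)*a*b)*F0
      + C (1*c^2 + 1*c)*F1) := by
    linear_combination (norm := (simp only [map_add, map_mul, map_pow, map_ofNat, map_neg, map_sub, map_one]; ring1)) ((X : ℂ⟦X⟧) - X ^ 2) * hd + (C (1*a + 1*b + 3)*X
      + C ((-1)*c + (-1))) * hE
  have hd2 := congrArg (⇑(derivative ℂ)) hE3
  simp only [map_sub, map_add, dmul, derivative_X, derivative_C, pow_two,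
    ← hF1, ← hF2, ← hF3, ← hF4] at hd2
  have hE4 : ((X : ℂ⟦X⟧) - X ^ 2) ^ 3 * F4 = (C (1*a^3 + 1*a^2*b + 6*a^2 + 1*a*b^2 + 6*a*b + 11*a + 1*b^3 + 6*b^2 + 11*b + 6)*X^3*F1
      + C (1*a^3*b + 1*a^2*b^2 + 6*a^2*b + 1*a*b^3 + 6*a*b^2 + 11*a*b)*X^2*F0
      + C (2*a^2*b + (-3)*a^2*c + 2*a*b^2 + (-4)*a*b*c + 8*a*b + (-15)*a*c + (-3)*b^2*c + (-15)*b*c + (-18)*c)*X^2*F1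
      + C (1*a^2*b^2 + (-2)*a^2*b*c + (-1)*a^2*b + (-2)*a*b^2*c + (-1)*a*b^2 + (-8)*a*b*c + (-7)*a*b)*X*F0
      + C ((-2)*a*b*c + (-2)*a*b + 3*a*c^2 + 3*a*c + 3*b*c^2 + 3*b*c + 9*c^2 + 9*c)*X*F1
      + C (1*a*b*c^2 + 3*a*b*c + 2*a*b)*F0
      + C ((-1)*c^3 + (-3)*c^2 + (-2)*c)*F1) := by
    linear_combination (norm := (simp only [map_add, map_mul, map_pow, map_ofNat, map_neg, map_sub, map_one]; ring1)) ((X : ℂ⟦X⟧) - X ^ 2) * hd2 + (C (1*a^2 + 1*a*b + 3*a + 1*b^2 + 3*b + 2)*X^2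
      + C (1*a*b + (-2)*a*c + (-2)*b*c + (-4)*c)*X
      + C (1*c^2 + 1*c)) * hE + (C (4)*X
      + C ((-2))) * hE3
  have hs : ((X : ℂ⟦X⟧) - X ^ 2) ≠ 0 := by
    intro h
    have h1 := congrArg (coeff 1) h
    rw [pow_two] at h1
    simp [coeff_succ_X_mul] at h1
  have hy1 : derivative ℂ Y = C 3 * F0 ^ 2 * F1 := by
    rw [hYdef, pow_succ, pow_two]
    simp only [dmul, ← hF1]
    linear_combination (norm := (simp only [map_add, map_mul, map_pow, map_ofNat, map_neg, map_sub, map_one]; ring1))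
  have hT1 : T1 = (C (3)*X*F0^2*F1) := by
    rw [hT1def, hy1]
    linear_combination (norm := (simp only [map_add, map_mul, map_pow, map_ofNat, map_neg, map_sub, map_one]; ring1))
  have hT2 : T2 = (C (3)*X^2*F0^2*F2
      + C (6)*X^2*F0*F1^2
      + C (3)*X*F0^2*F1) := by
    rw [hT2def, hT1]
    simp only [map_add, dmul, dpow3, derivative_X, derivative_C, pow_two, ← hF1, ← hF2, ← hF3, ← hF4]
    linear_combination (norm := (simp only [map_add, map_mul, map_pow, map_ofNat, map_neg, map_sub, map_one]; ring1))
  have hT3 : T3 = (C (3)*X^3*F0^2*F3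
      + C (18)*X^3*F0*F1*F2
      + C (6)*X^3*F1^3
      + C (9)*X^2*F0^2*F2
      + C (18)*X^2*F0*F1^2
      + C (3)*X*F0^2*F1) := by
    rw [hT3def, hT2]
    simp only [map_add, dmul, dpow3, derivative_X, derivative_C, pow_two, ← hF1, ← hF2, ← hF3, ← hF4]
    linear_combination (norm := (simp only [map_add, map_mul, map_pow, map_ofNat, map_neg, map_sub, map_one]; ring1))
  have hT4 : T4 = (C (3)*X^4*F0^2*F4
      + C (24)*X^4*F0*F1*F3
      + C (18)*X^4*F0*F2^2
      + C (36)*X^4*F1^2*F2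
      + C (18)*X^3*F0^2*F3
      + C (108)*X^3*F0*F1*F2
      + C (36)*X^3*F1^3
      + C (21)*X^2*F0^2*F2
      + C (42)*X^2*F0*F1^2
      + C (3)*X*F0^2*F1) := by
    rw [hT4def, hT3]
    simp only [map_add, dmul, dpow3, derivative_X, derivative_C, pow_two, ← hF1, ← hF2, ← hF3, ← hF4]
    linear_combination (norm := (simp only [map_add, map_mul, map_pow, map_ofNat, map_neg, map_sub, map_one]; ring1))
  have hflat : (C ((-3))*X^7*F0^2*F4
      + C ((-24))*X^7*F0*F1*F3
      + C ((-18))*X^7*F0*F2^2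
      + C ((-36))*X^7*F1^2*F2
      + C ((-18)*a + (-18)*b + (-18))*X^6*F0^2*F3
      + C (9)*X^6*F0^2*F4
      + C ((-108)*a + (-108)*b + (-108))*X^6*F0*F1*F2
      + C (72)*X^6*F0*F1*F3
      + C (54)*X^6*F0*F2^2
      + C ((-36)*a + (-36)*b + (-36))*X^6*F1^3
      + C (108)*X^6*F1^2*F2
      + C ((-33)*a^2 + (-96)*a*b + (-54)*a + (-33)*b^2 + (-54)*b + (-21))*X^5*F0^2*F2
      + C (36*a + 36*b + 18*c + 36)*X^5*F0^2*F3
      + C ((-9))*X^5*F0^2*F4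
      + C ((-66)*a^2 + (-192)*a*b + (-108)*a + (-66)*b^2 + (-108)*b + (-42))*X^5*F0*F1^2
      + C (216*a + 216*b + 108*c + 216)*X^5*F0*F1*F2
      + C ((-72))*X^5*F0*F1*F3
      + C ((-54))*X^5*F0*F2^2
      + C (72*a + 72*b + 36*c + 72)*X^5*F1^3
      + C ((-108))*X^5*F1^2*F2
      + C ((-18)*a^3 + (-144)*a^2*b + (-33)*a^2 + (-144)*a*b^2 + (-96)*a*b + (-18)*a + (-18)*b^3 + (-33)*b^2 + (-18)*b + (-3))*X^4*F0^2*F1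
      + C (33*a^2 + 126*a*b + 66*a*c + 54*a + 33*b^2 + 66*b*c + 54*b + 42*c + 21)*X^4*F0^2*F2
      + C ((-18)*a + (-18)*b + (-36)*c + (-18))*X^4*F0^2*F3
      + C (3)*X^4*F0^2*F4
      + C (66*a^2 + 252*a*b + 132*a*c + 108*a + 66*b^2 + 132*b*c + 108*b + 84*c + 42)*X^4*F0*F1^2
      + C ((-108)*a + (-108)*b + (-216)*c + (-108))*X^4*F0*F1*F2
      + C (24)*X^4*F0*F1*F3
      + C (18)*X^4*F0*F2^2
      + C ((-36)*a + (-36)*b + (-72)*c + (-36))*X^4*F1^3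
      + C (36)*X^4*F1^2*F2
      + C ((-18)*a^3*b + (-45)*a^2*b^2 + (-18)*a*b^3)*X^3*F0^3
      + C (90*a^2*b + 54*a^2*c + 90*a*b^2 + 198*a*b*c + 45*a*c + 54*b^2*c + 45*b*c + 9*c)*X^3*F0^2*F1
      + C ((-30)*a*b + (-66)*a*c + (-66)*b*c + (-33)*c^2 + (-30)*c)*X^3*F0^2*F2
      + C (18*c)*X^3*F0^2*F3
      + C ((-60)*a*b + (-132)*a*c + (-132)*b*c + (-66)*c^2 + (-60)*c)*X^3*F0*F1^2
      + C (108*c)*X^3*F0*F1*F2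
      + C (36*c)*X^3*F1^3
      + C (9*a^2*b^2 + 36*a^2*b*c + (-15)*a^2*b + 36*a*b^2*c + (-15)*a*b^2 + (-6)*a*b*c + 3*a*b)*X^2*F0^3
      + C ((-90)*a*b*c + 30*a*b + (-54)*a*c^2 + 21*a*c + (-54)*b*c^2 + 21*b*c + (-12)*c^2 + 3*c)*X^2*F0^2*F1
      + C (33*c^2 + (-12)*c)*X^2*F0^2*F2
      + C (66*c^2 + (-24)*c)*X^2*F0*F1^2
      + C ((-18)*a*b*c^2 + 21*a*b*c + (-6)*a*b)*X*F0^3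
      + C (18*c^3 + (-21)*c^2 + 6*c)*X*F0^2*F1) = 0 := by
    apply mul_left_cancel₀ (pow_ne_zero 3 hs)
    rw [mul_zero]
    linear_combination (norm := (simp only [map_add, map_mul, map_pow, map_ofNat, map_neg, map_sub, map_one]; ring1)) (C ((-3))*X^7*F0^2
      + C (9)*X^6*F0^2
      + C ((-9))*X^5*F0^2
      + C (3)*X^4*F0^2) * hE4 + (C (24)*X^9*F0*F1
      + C (18*a + 18*b + 18)*X^8*F0^2
      + C ((-96))*X^8*F0*F1
      + C ((-54)*a + (-54)*b + (-18)*c + (-54))*X^7*F0^2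
      + C (144)*X^7*F0*F1
      + C (54*a + 54*b + 54*c + 54)*X^6*F0^2
      + C ((-96))*X^6*F0*F1
      + C ((-18)*a + (-18)*b + (-54)*c + (-18))*X^5*F0^2
      + C (24)*X^5*F0*F1
      + C (18*c)*X^4*F0^2) * hE3 + (C ((-18))*X^11*F0*F2
      + C ((-36))*X^11*F1^2
      + C ((-90)*a + (-90)*b + (-90))*X^10*F0*F1
      + C (90)*X^10*F0*F2
      + C (180)*X^10*F1^2
      + C ((-33)*a^2 + (-78)*a*b + (-54)*a + (-33)*b^2 + (-54)*b + (-21))*X^9*F0^2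
      + C (360*a + 360*b + 90*c + 360)*X^9*F0*F1
      + C ((-180))*X^9*F0*F2
      + C ((-360))*X^9*F1^2
      + C (99*a^2 + 246*a*b + 66*a*c + 162*a + 99*b^2 + 66*b*c + 162*b + 42*c + 63)*X^8*F0^2
      + C ((-540)*a + (-540)*b + (-360)*c + (-540))*X^8*F0*F1
      + C (180)*X^8*F0*F2
      + C (360)*X^8*F1^2
      + C ((-99)*a^2 + (-270)*a*b + (-198)*a*c + (-162)*a + (-99)*b^2 + (-198)*b*c + (-162)*b + (-33)*c^2 + (-114)*c + (-63))*X^7*F0^2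
      + C (360*a + 360*b + 540*c + 360)*X^7*F0*F1
      + C ((-90))*X^7*F0*F2
      + C ((-180))*X^7*F1^2
      + C (33*a^2 + 114*a*b + 198*a*c + 54*a + 33*b^2 + 198*b*c + 54*b + 99*c^2 + 90*c + 21)*X^6*F0^2
      + C ((-90)*a + (-90)*b + (-360)*c + (-90))*X^6*F0*F1
      + C (18)*X^6*F0*F2
      + C (36)*X^6*F1^2
      + C ((-12)*a*b + (-66)*a*c + (-66)*b*c + (-99)*c^2 + (-6)*c)*X^5*F0^2
      + C (90*c)*X^5*F0*F1
      + C (33*c^2 + (-12)*c)*X^4*F0^2) * hE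
  have hTser : (C (6*c^3 + (-18)*c^2 + 18*c + (-6)) * T1 + C (11*c^2 + (-22)*c + 11) * T2 + C (6*c + (-6)) * T3 + C (1) * T4)
      + X * (C ((-18)*a*b*c^2 + 21*a*b*c + (-6)*a*b) * Y + C ((-30)*a*b*c + 20*a*b + (-18)*a*c^2 + 29*a*c + (-12)*a + (-18)*b*c^2 + 29*b*c + (-12)*b + 7*c^2 + (-13)*c + 6) * T1 + C ((-10)*a*b + (-22)*a*c + 18*a + (-22)*b*c + 18*b + (-11)*c^2 + 26*c + (-15)) * T2 + C ((-6)*a + (-6)*b + (-12)*c + 12) * T3 + C ((-3)) * T4)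
      + X * (X * (C (9*a^2*b^2 + 36*a^2*b*c + (-15)*a^2*b + 36*a*b^2*c + (-15)*a*b^2 + (-6)*a*b*c + 3*a*b) * Y + C (30*a^2*b + 18*a^2*c + (-11)*a^2 + 30*a*b^2 + 66*a*b*c + (-42)*a*b + (-7)*a*c + 6*a + 18*b^2*c + (-11)*b^2 + (-7)*b*c + 6*b + 1*c + (-1)) * T1 + C (11*a^2 + 42*a*b + 22*a*c + (-18)*a + 11*b^2 + 22*b*c + (-18)*b + (-4)*c + 4) * T2 + C (12*a + 12*b + 6*c + (-6)) * T3 + C (3) * T4))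
      + X * (X * (X * (C ((-18)*a^3*b + (-45)*a^2*b^2 + (-18)*a*b^3) * Y + C ((-6)*a^3 + (-48)*a^2*b + (-48)*a*b^2 + (-6)*b^3) * T1 + C ((-11)*a^2 + (-32)*a*b + (-11)*b^2) * T2 + C ((-6)*a + (-6)*b) * T3 + C ((-1)) * T4))) = 0 := by
    linear_combination (norm := (simp only [map_add, map_mul, map_pow, map_ofNat, map_neg, map_sub, map_one]; ring1)) hflat + (X*C ((-18)*a*b*c^2 + 21*a*b*c + (-6)*a*b) + X^2*C (9*a^2*b^2 + 36*a^2*b*c + (-15)*a^2*b + 36*a*b^2*c + (-15)*a*b^2 + (-6)*a*b*c + 3*a*b) + X^3*C ((-18)*a^3*b + (-45)*a^2*b^2 + (-18)*a*b^3)) * hYdef + (C (6*c^3 + (-18)*c^2 + 18*c + (-6)) + X*C ((-30)*a*b*c + 20*a*b + (-18)*a*c^2 + 29*a*c + (-12)*a + (-18)*b*c^2 + 29*b*c + (-12)*b + 7*c^2 + (-13)*c + 6) + X^2*C (30*a^2*b + 18*a^2*c + (-11)*a^2 + 30*a*b^2 + 66*a*b*c + (-42)*a*b + (-7)*a*c +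 6*a + 18*b^2*c + (-11)*b^2 + (-7)*b*c + 6*b + 1*c + (-1)) + X^3*C ((-6)*a^3 + (-48)*a^2*b + (-48)*a*b^2 + (-6)*b^3)) * hT1
      + (C (11*c^2 + (-22)*c + 11) + X*C ((-10)*a*b + (-22)*a*c + 18*a + (-22)*b*c + 18*b + (-11)*c^2 + 26*c + (-15)) + X^2*C (11*a^2 + 42*a*b + 22*a*c + (-18)*a + 11*b^2 + 22*b*c + (-18)*b + (-4)*c + 4) + X^3*C ((-11)*a^2 + (-32)*a*b + (-11)*b^2)) * hT2 + (C (6*c + (-6)) + X*C ((-6)*a + (-6)*b + (-12)*c + 12) + X^2*C (12*a + 12*b + 6*c + (-6)) + X^3*C ((-6)*a + (-6)*b)) * hT3 + (C (1) + X*C ((-3)) + X^2*C (3) + X^3*C ((-1))) * hT4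
  have hth : ∀ (p : ℕ) (g : ℂ⟦X⟧),
      coeff p (X * derivative ℂ g) = (p : ℂ) * coeff p g := by
    intro p g
    cases p with
    | zero => simp
    | succ q => rw [coeff_succ_X_mul, coeff_derivative]; push_cast; ring
  have hco := congrArg (⇑(coeff (m + 1 + 1 + 1))) hTser
  simp only [LinearMap.map_add, LinearMap.map_zero, coeff_succ_X_mul, coeff_C_mul,
    hT1def, hT2def, hT3def, hT4def, hth] at hco
  rw [show m + 1 + 1 + 1 = m + 2 + 1 from rfl, show m + 1 + 1 = m + 2 from rfl] at hco
  push_cast at hco ⊢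
  linear_combination hco

theorem cubed_hypergeometric_recurrence
    (a b c z : ℂ)
    (hz : ‖z‖ < 1)
    (hc : ∀ k : ℕ, c + (k : ℂ) ≠ 0)
    (hc2 : ∀ n : ℕ, 1 ≤ n → 2 * c + (n : ℂ) - 1 ≠ 0)
    (hc3 : ∀ n : ℕ, 1 ≤ n → 3 * c + (n : ℂ) - 2 ≠ 0)
    (v : ℕ → ℂ)
    (hv0 : v 0 = 1)
    (hv1 : v 1 = 3 * a * b / c)
    (hv2 : v 2 = 3 * a ^ 2 * b ^ 2 / c ^ 2
      + 3 * a * (a + 1) * b * (b + 1) / (2 * c * (c + 1)))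
    (hrec : ∀ n : ℕ, 2 ≤ n →
      v (n + 1) =
        ((3 * (n : ℂ) ^ 4 + 6 * (a + b + 2 * c - 2) * (n : ℂ) ^ 3
            + (2 * a * (5 * b + 11 * c - 9) + 11 * c * (2 * b + c) - 18 * b - 26 * c + 15)
              * (n : ℂ) ^ 2
            + (c ^ 2 * (18 * a + 18 * b - 7) + c * (a * (30 * b - 29) - 29 * b + 13)
              + 4 * a * (3 - 5 * b) + 12 * b - 6) * (n : ℂ)
            + 3 * a * b * (c * (6 * c - 7) + 2)) /
          (((n : ℂ) + 1) * (c + (n : ℂ)) * (2 * c + (n : ℂ) - 1) * (3 * c + (n : ℂ) - 2)))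
            * v n
        + (-(3 * (n : ℂ) ^ 4 + 6 * (2 * a + 2 * b + c - 3) * (n : ℂ) ^ 3
            + (11 * a ^ 2 + 42 * a * b + 22 * a * c - 54 * a + 11 * b ^ 2 + 22 * b * c
              - 54 * b - 22 * c + 40) * (n : ℂ) ^ 2
            + 3 * (10 * a ^ 2 * b + 6 * a ^ 2 * c - 11 * a ^ 2 + 10 * a * b ^ 2
              + 22 * a * b * c - 42 * a * b - 17 * a * c + 26 * a + 6 * b ^ 2 * c
              - 11 * b ^ 2 - 17 * b * c + 26 * b + 9 * c - 13) * (n : ℂ)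
            + 9 * a ^ 2 * b ^ 2 + 36 * a ^ 2 * b * c - 45 * a ^ 2 * b - 18 * a ^ 2 * c
              + 22 * a ^ 2 + 36 * a * b ^ 2 * c - 45 * a * b ^ 2 - 72 * a * b * c
              + 87 * a * b + 29 * a * c - 36 * a - 18 * b ^ 2 * c + 22 * b ^ 2
              + 29 * b * c - 36 * b - 11 * c + 14) /
          (((n : ℂ) + 1) * (c + (n : ℂ)) * (2 * c + (n : ℂ) - 1) * (3 * c + (n : ℂ) - 2)))
            * v (n - 1)
        + ((3 * a + (n : ℂ) - 2) * (3 * b + (n : ℂ) - 2) * (2 * a + b + (n : ℂ) - 2)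
            * (a + 2 * b + (n : ℂ) - 2) /
          (((n : ℂ) + 1) * (c + (n : ℂ)) * (2 * c + (n : ℂ) - 1) * (3 * c + (n : ℂ) - 2)))
            * v (n - 2)) :
    (hyperF a b c z) ^ 3 = ∑' n : ℕ, v n * z ^ n := by
  have key : ∀ n : ℕ, v n = PowerSeries.coeff n ((fHG a b c) ^ 3) := by
    intro n
    induction n using Nat.strong_induction_on with
    | _ n ih =>
      match n, ih with
      | 0, _ => rw [hv0, coeff_cube_zero]
      | 1, _ => rw [hv1, coeff_cube_one]
      | 2, _ => rw [hv2, coeff_cube_two]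
      | (k+3), ih =>
        have h2 : 2 ≤ k + 2 := by omega
        have hrw := hrec (k+2) h2
        rw [show k+2+1 = k+3 from rfl, show k+2-1 = k+1 from rfl,
          show k+2-2 = k from rfl] at hrw
        rw [hrw, ih (k+2) (by omega), ih (k+1) (by omega), ih k (by omega)]
        have hw := wrec a b c hc (k+2) h2
        rw [show k+2+1 = k+3 from rfl, show k+2-1 = k+1 from rfl,
          show k+2-2 = k from rfl] at hw
        have hD1 : (((k+2:ℕ)):ℂ) + 1 ≠ 0 := by
          have h' : (((k+2:ℕ)):ℂ) + 1 = ((k+3 : ℕ):ℂ) := by push_cast; ring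
          rw [h']; exact Nat.cast_ne_zero.mpr (by omega)
        have hD : (((k+2:ℕ)):ℂ) + 1 ≠ 0 ∧ True := ⟨hD1, trivial⟩
        have hDne : ((((k+2:ℕ)):ℂ) + 1) * (c + ((k+2:ℕ):ℂ))
            * (2 * c + ((k+2:ℕ):ℂ) - 1) * (3 * c + ((k+2:ℕ):ℂ) - 2) ≠ 0 :=
          mul_ne_zero (mul_ne_zero (mul_ne_zero hD1 (hc (k+2)))
            (hc2 (k+2) (by omega))) (hc3 (k+2) (by omega))
        rw [div_mul_eq_mul_div, div_mul_eq_mul_div, div_mul_eq_mul_div,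
          ← add_div, ← add_div, div_eq_iff hDne]
        linear_combination -hw
  have hF : hyperF a b c z = ∑' k : ℕ, tcHG a b c k * z ^ k := rfl
  rw [hF, cube_tsum a b c z hc hz]
  exact tsum_congr fun n => by rw [key n]
end

section
/- Let z be a complex number with |z| < 1. Define a sequence (v_n) by v_0 = 1, v_1 = 3/4, v_2 = 39/64, and for n ≥ 2, v_{n+1} = ((2n(n+1)(6n(n+1)+7) + 3)/(4(n+1)⁴)) v_n − ((48n⁴ + 32n² + 1)/(16(n+1)⁴)) v_{n-1} + ((2n−1)⁴/(16(n+1)⁴)) v_{n-2}. Then F(1/2, 1/2; 1; z²)³ = ∑_{n=0}^∞ v_n z^{2n}. (Equivalently, the cube of the complete elliptic integral of the first kind satisfies K(z)³ = (π³/8) ∑_{n=0}^∞ v_n z^{2n}, since K(z) = (π/2) F(1/2,1/2;1;z²).) -/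
open scoped Nat

section Aux

open PowerSeries

/-- coefficients of F(1/2,1/2;1;x) : `aaF k = ((1/2)_k / k!)^2` -/
noncomputable def aaF : ℕ → ℝ := fun k => ((ascPochhammer ℝ k).eval (2⁻¹ : ℝ) / (k ! : ℝ)) ^ 2

lemma aaF_rec (k : ℕ) : 4 * ((k : ℝ) + 1) ^ 2 * aaF (k + 1) = (2 * (k : ℝ) + 1) ^ 2 * aaF k := by
  have hk : ((k ! : ℝ)) ≠ 0 := Nat.cast_ne_zero.mpr k.factorial_ne_zero
  simp only [aaF, ascPochhammer_succ_right, Polynomial.eval_mul, Polynomial.eval_add,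
    Polynomial.eval_X, Polynomial.eval_natCast, Nat.factorial_succ, Nat.cast_mul, Nat.cast_add,
    Nat.cast_one]
  field_simp
  ring

lemma aaF_zero : aaF 0 = 1 := by simp [aaF]
lemma aaF_one : aaF 1 = 1/4 := by
  simp [aaF, ascPochhammer_succ_right]; norm_num
lemma aaF_two : aaF 2 = 9/64 := by
  simp [aaF, ascPochhammer_succ_right]; norm_num

lemma aaF_nonneg (k : ℕ) : 0 ≤ aaF k := by unfold aaF; positivity

lemma aaF_le_one (k : ℕ) : aaF k ≤ 1 := by
  induction k with
  | zero => simp [aaF_zero]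
  | succ n ih =>
    have h := aaF_rec n
    have hn := aaF_nonneg n
    have h4 : (0:ℝ) < 4 * ((n:ℝ) + 1) ^ 2 := by positivity
    refine (mul_le_mul_iff_right₀ h4).mp ?_
    rw [h]
    have h5 := mul_le_mul_of_nonneg_left ih (sq_nonneg (2*(n:ℝ)+1))
    nlinarith [(Nat.cast_nonneg n : (0:ℝ) ≤ n)]

/-- the power series F(1/2,1/2;1;x) -/
noncomputable def ff : ℝ⟦X⟧ := PowerSeries.mk aaF

local notation "DD" => (PowerSeries.derivative ℝ)

@[simp] lemma coeff_ofNat_mul (k : ℕ) [k.AtLeastTwo] (n : ℕ) (g : ℝ⟦X⟧) :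
    coeff n (no_index (OfNat.ofNat k) * g) = (OfNat.ofNat k : ℝ) * coeff n g := by
  rw [show (OfNat.ofNat k : ℝ⟦X⟧) = C (OfNat.ofNat k : ℝ) from (map_ofNat (C (R := ℝ)) k).symm,
    coeff_C_mul]

@[simp] lemma coeff_zero_X_mul' (g : ℝ⟦X⟧) : coeff 0 (X * g) = 0 := by
  simp [coeff_zero_eq_constantCoeff]

lemma coeff_XD (n : ℕ) (g : ℝ⟦X⟧) :
    coeff n (X * DD g) = (n : ℝ) * coeff n g := by
  cases n with
  | zero => simp
  | succ m => rw [coeff_succ_X_mul, coeff_derivative]; push_cast; ring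

/-- the hypergeometric ODE satisfied by ff -/
lemma ffODE : 4*(X*(DD (DD ff))) - 4*(X*(X*(DD (DD ff)))) + 4*(DD ff) - 8*(X*(DD ff)) - ff = 0 := by
  ext n
  rcases n with _ | n
  · simp only [map_sub, map_add, map_zero, coeff_ofNat_mul, coeff_zero_X_mul', coeff_XD,
      coeff_derivative, ff, coeff_mk, Nat.cast_zero, zero_mul, mul_zero, sub_zero, zero_add]
    linear_combination (norm := (push_cast; ring1)) aaF_rec 0
  · simp only [map_sub, map_add, map_zero, coeff_ofNat_mul, coeff_succ_X_mul, coeff_XD,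
      coeff_derivative, ff, coeff_mk]
    push_cast
    linear_combination (norm := (push_cast; ring1)) aaF_rec (n + 1)

@[simp] lemma D_ofNat (k : ℕ) [k.AtLeastTwo] :
    DD (no_index (OfNat.ofNat k) : ℝ⟦X⟧) = 0 := by
  rw [show (OfNat.ofNat k : ℝ⟦X⟧) = C (OfNat.ofNat k : ℝ) from (map_ofNat (C (R := ℝ)) k).symm,
    derivative_C]

set_option maxHeartbeats 1000000 in
/-- certificate: the θ-form of the symmetric-cube ODE operator applied to `u³` is a
combination of the hypergeometric ODE expression `e` and its derivatives. -/
lemma keyid (u t1 t2 t3 t4 e : ℝ⟦X⟧)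
    (ht1 : t1 = X * DD (u*u*u)) (ht2 : t2 = X * DD t1) (ht3 : t3 = X * DD t2)
    (ht4 : t4 = X * DD t3)
    (he : e = 4*(X*(DD (DD u))) - 4*(X*(X*(DD (DD u)))) + 4*(DD u) - 8*(X*(DD u)) - u) :
    X*(48*t4 + 96*t3 + 104*t2 + 56*t1 + 12*(u*u*u))
      - X*(X*(48*t4 + 192*t3 + 320*t2 + 256*t1 + 81*(u*u*u)))
      + X*(X*(X*(16*t4 + 96*t3 + 216*t2 + 216*t1 + 81*(u*u*u))))
      - 16*t4
    = X * ( (24*(X*X*X) - 12*(X*X) - 12*(X*X*X*X)) * (u*u) * (DD (DD e))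
          + ( (108*(X*X) - 36*X - 72*(X*X*X)) * (u*u)
              + (192*(X*X*X) - 96*(X*X) - 96*(X*X*X*X)) * (u * DD u) ) * (DD e)
          + ( (81*X - 12 - 81*(X*X)) * (u*u)
              + (504*(X*X) - 168*X - 336*(X*X*X)) * (u * DD u)
              + (288*(X*X*X) - 144*(X*X) - 144*(X*X*X*X)) * (DD u * DD u)
              + (144*(X*X*X) - 72*(X*X) - 72*(X*X*X*X)) * (u * DD (DD u)) ) * e ) := by
  subst ht4 ht3 ht2 ht1 he
  simp only [Derivation.leibniz, smul_eq_mul, map_sub, map_add, D_ofNat, derivative_X,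
    mul_one, mul_zero, zero_mul, add_zero, zero_add, sub_zero]
  ring

/-- θ-form of the symmetric-cube ODE annihilates ff³ -/
lemma Mtheta :
    X*(48*(X * DD (X * DD (X * DD (X * DD (ff*ff*ff)))))
        + 96*(X * DD (X * DD (X * DD (ff*ff*ff))))
        + 104*(X * DD (X * DD (ff*ff*ff))) + 56*(X * DD (ff*ff*ff)) + 12*(ff*ff*ff))
      - X*(X*(48*(X * DD (X * DD (X * DD (X * DD (ff*ff*ff)))))
        + 192*(X * DD (X * DD (X * DD (ff*ff*ff))))
        + 320*(X * DD (X * DD (ff*ff*ff))) + 256*(X * DD (ff*ff*ff)) + 81*(ff*ff*ff)))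
      + X*(X*(X*(16*(X * DD (X * DD (X * DD (X * DD (ff*ff*ff)))))
        + 96*(X * DD (X * DD (X * DD (ff*ff*ff))))
        + 216*(X * DD (X * DD (ff*ff*ff))) + 216*(X * DD (ff*ff*ff)) + 81*(ff*ff*ff))))
      - 16*(X * DD (X * DD (X * DD (X * DD (ff*ff*ff))))) = 0 := by
  have h := keyid ff _ _ _ _ _ rfl rfl rfl rfl rfl
  rw [h, ffODE]
  simp

/-- the four-term recurrence for `W n = coeff n (ff³)` -/
lemma Wrec (m : ℕ) :
    16*((m:ℝ)+3)^4 * coeff (m+3) (ff*ff*ff)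
      = (48*((m:ℝ)+2)^4 + 96*((m:ℝ)+2)^3 + 104*((m:ℝ)+2)^2 + 56*((m:ℝ)+2) + 12)
          * coeff (m+2) (ff*ff*ff)
        - (48*((m:ℝ)+2)^4 + 32*((m:ℝ)+2)^2 + 1) * coeff (m+1) (ff*ff*ff)
        + (2*(m:ℝ)+3)^4 * coeff m (ff*ff*ff) := by
  have h := congrArg (coeff (R := ℝ) (m+3)) Mtheta
  rw [show m+3 = (m+2)+1 from rfl] at h
  simp only [map_sub, map_add, map_zero, coeff_ofNat_mul, coeff_succ_X_mul, coeff_derivative,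
    coeff_XD] at h
  rw [show m+1+1 = m+2 from rfl, show m+2+1 = m+3 from rfl] at h
  push_cast at h
  linear_combination -h

lemma W0 : coeff 0 (ff*ff*ff) = 1 := by
  simp [coeff_mul, Finset.Nat.sum_antidiagonal_eq_sum_range_succ_mk, Finset.sum_range_succ,
    ff, aaF_zero]
lemma W1 : coeff 1 (ff*ff*ff) = 3/4 := by
  simp [coeff_mul, Finset.Nat.sum_antidiagonal_eq_sum_range_succ_mk, Finset.sum_range_succ,
    ff, aaF_zero, aaF_one]
  norm_num
lemma W2 : coeff 2 (ff*ff*ff) = 39/64 := by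
  simp [coeff_mul, Finset.Nat.sum_antidiagonal_eq_sum_range_succ_mk, Finset.sum_range_succ,
    ff, aaF_zero, aaF_one, aaF_two]
  norm_num

lemma hyper_eq (z : ℂ) :
    hyperF (1/2) (1/2) 1 (z^2) = ∑' k : ℕ, ((aaF k : ℝ) : ℂ) * z ^ (2*k) := by
  unfold hyperF
  refine tsum_congr fun k => ?_
  have h1 : (ascPochhammer ℂ k).eval (1:ℂ) = (k ! : ℂ) := ascPochhammer_eval_one ℂ k
  have h2 : (ascPochhammer ℂ k).eval ((1:ℂ)/2) = (((ascPochhammer ℝ k).eval (2⁻¹:ℝ) : ℝ) : ℂ) := by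
    rw [← ascPochhammer_map (algebraMap ℝ ℂ) k, show ((1:ℂ)/2) = algebraMap ℝ ℂ (2⁻¹:ℝ) by
      norm_num]
    rw [Polynomial.eval_map, Polynomial.eval₂_at_apply]
    simp
  rw [h1, h2, pow_mul]
  have hk : ((k ! : ℂ)) ≠ 0 := Nat.cast_ne_zero.mpr k.factorial_ne_zero
  unfold aaF
  push_cast
  field_simp

lemma cube_tsum_s11 (z : ℂ) (hz : ‖z‖ < 1) :
    (∑' k : ℕ, ((aaF k : ℝ) : ℂ) * z ^ (2*k)) ^ 3
      = ∑' n : ℕ, ((coeff n (ff*ff*ff) : ℝ) : ℂ) * z ^ (2*n) := by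
  set cc : ℕ → ℂ := fun k => ((aaF k : ℝ) : ℂ) * z ^ (2*k) with hcc_def
  have hgeom : Summable (fun k : ℕ => (‖z‖ ^ 2) ^ k) := by
    apply summable_geometric_of_lt_one (by positivity)
    have := norm_nonneg z
    nlinarith
  have hcc : Summable (fun k => ‖cc k‖) := by
    refine hgeom.of_nonneg_of_le (fun k => norm_nonneg _) fun k => ?_
    have h1 : ‖cc k‖ = aaF k * ‖z‖ ^ (2*k) := by
      simp [hcc_def, abs_of_nonneg (aaF_nonneg k), norm_pow]
    rw [h1, pow_mul]
    have h2 : (0:ℝ) ≤ (‖z‖ ^ 2) ^ k := by positivity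
    nlinarith [aaF_le_one k, aaF_nonneg k]
  have hnorm2 := summable_norm_sum_mul_antidiagonal_of_summable_norm hcc hcc
  have hmul2 := tsum_mul_tsum_eq_tsum_sum_antidiagonal_of_summable_norm hcc hcc
  have hmul3 := tsum_mul_tsum_eq_tsum_sum_antidiagonal_of_summable_norm hnorm2 hcc
  have hpow : (∑' k, cc k)^3 = ((∑' k, cc k) * (∑' k, cc k)) * (∑' k, cc k) := by ring
  rw [hpow, hmul2, hmul3]
  refine tsum_congr fun n => ?_
  have inner : ∀ j : ℕ, (∑ p ∈ Finset.HasAntidiagonal.antidiagonal j, cc p.1 * cc p.2)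
      = ((coeff j (ff*ff) : ℝ) : ℂ) * z ^ (2*j) := by
    intro j
    rw [PowerSeries.coeff_mul]
    push_cast
    rw [Finset.sum_mul]
    refine Finset.sum_congr rfl fun p hp => ?_
    have hpj : p.1 + p.2 = j := Finset.HasAntidiagonal.mem_antidiagonal.mp hp
    simp only [hcc_def, ff, coeff_mk]
    rw [show 2*j = 2*p.1 + 2*p.2 by omega, pow_add]
    ring
  calc (∑ p ∈ Finset.HasAntidiagonal.antidiagonal n, (∑ q ∈ Finset.HasAntidiagonal.antidiagonal p.1, cc q.1 * cc q.2) * cc p.2)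
      = ∑ p ∈ Finset.HasAntidiagonal.antidiagonal n, ((coeff p.1 (ff*ff) : ℝ) : ℂ) * z^(2*p.1) * cc p.2 := by
        refine Finset.sum_congr rfl fun p _ => ?_; rw [inner p.1]
    _ = ((coeff n ((ff*ff)*ff) : ℝ) : ℂ) * z ^ (2*n) := by
        rw [PowerSeries.coeff_mul]
        push_cast
        rw [Finset.sum_mul]
        refine Finset.sum_congr rfl fun p hp => ?_
        have hpn : p.1 + p.2 = n := Finset.HasAntidiagonal.mem_antidiagonal.mp hp
        simp only [hcc_def, ff, coeff_mk]
        rw [show 2*n = 2*p.1 + 2*p.2 by omega, pow_add]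
        ring

end Aux

theorem cubed_elliptic_K_recurrence
    (z : ℂ) (hz : ‖z‖ < 1)
    (v : ℕ → ℝ)
    (hv0 : v 0 = 1)
    (hv1 : v 1 = 3 / 4)
    (hv2 : v 2 = 39 / 64)
    (hrec : ∀ n : ℕ, 2 ≤ n →
      v (n + 1) =
        ((2 * (n : ℝ) * ((n : ℝ) + 1) * (6 * (n : ℝ) * ((n : ℝ) + 1) + 7) + 3) /
          (4 * ((n : ℝ) + 1) ^ 4)) * v n
        - ((48 * (n : ℝ) ^ 4 + 32 * (n : ℝ) ^ 2 + 1) / (16 * ((n : ℝ) + 1) ^ 4)) * v (n - 1)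
        + ((2 * (n : ℝ) - 1) ^ 4 / (16 * ((n : ℝ) + 1) ^ 4)) * v (n - 2)) :
    (hyperF (1 / 2) (1 / 2) 1 (z ^ 2)) ^ 3 = ∑' n : ℕ, (v n : ℂ) * z ^ (2 * n) := by
  have key : ∀ n : ℕ, v n = PowerSeries.coeff n (ff*ff*ff)
      ∧ v (n+1) = PowerSeries.coeff (n+1) (ff*ff*ff)
      ∧ v (n+2) = PowerSeries.coeff (n+2) (ff*ff*ff) := by
    intro n
    induction n with
    | zero => exact ⟨by rw [hv0, W0], by rw [hv1, W1], by rw [hv2, W2]⟩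
    | succ m ih =>
      obtain ⟨h0, h1, h2⟩ := ih
      refine ⟨h1, h2, ?_⟩
      have hr := hrec (m+2) (by omega)
      rw [show m+2-1 = m+1 from rfl, show m+2-2 = m from rfl] at hr
      have hW := Wrec m
      have hc : ((m:ℝ)+3) ≠ 0 := by positivity
      rw [show m+1+2 = m+2+1 from rfl, hr, h0, h1, h2, show m+2+1 = m+3 from rfl]
      push_cast
      rw [show ((m:ℝ)+2+1) = ((m:ℝ)+3) by ring]
      refine mul_left_cancel₀ (show (16:ℝ)*((m:ℝ)+3)^4 ≠ 0 by positivity) ?_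
      rw [hW]
      have hne : ((m:ℝ)+3) ≠ 0 := by positivity
      field_simp
      ring
  rw [hyper_eq z, cube_tsum_s11 z hz]
  exact tsum_congr fun n => by rw [(key n).1]
end

section
/- Let z be a complex number with |z| < 1. Define a sequence (v_n) by v_0 = 1, v_1 = −3/4, v_2 = 3/64, and for n ≥ 2, v_{n+1} = ((2n(6n³ − 5n − 5) − 3)/(4(n+1)⁴)) v_n − ((8n(2n(3(n−4)n + 13) − 9) + 29)/(16(n+1)⁴)) v_{n-1} + ((2n−7)(2n−5)(2n−3)(2n−1)/(16(n+1)⁴)) v_{n-2}. Then F(−1/2, 1/2; 1; z²)³ = ∑_{n=0}^∞ v_n z^{2n}. (Equivalently, the cube of the complete elliptic integral of the second kind satisfies E(z)³ = (π³/8) ∑_{n=0}^∞ v_n z^{2n}, since E(z) = (π/2) F(−1/2,1/2;1;z²).) -/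
open scoped Nat

section Aux
open PowerSeries

noncomputable def aR : ℕ → ℝ := fun k =>
  (ascPochhammer ℝ k).eval (-(1/2)) * (ascPochhammer ℝ k).eval (1/2) / ((k ! : ℝ) * k !)

lemma aR_zero : aR 0 = 1 := by simp [aR]

lemma aR_succ (k : ℕ) :
    aR (k + 1) = ((2*(k:ℝ) - 1) * (2*(k:ℝ) + 1) / (4 * ((k:ℝ)+1)^2)) * aR k := by
  have hk : ((k ! : ℝ)) ≠ 0 := by positivity
  have hk1 : ((k:ℝ) + 1) ≠ 0 := by positivity
  simp only [aR, ascPochhammer_succ_eval, Nat.factorial_succ, Nat.cast_mul, Nat.cast_add,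
    Nat.cast_one]
  field_simp
  ring

noncomputable def A : ℝ⟦X⟧ := PowerSeries.mk aR

local notation "δ" => d⁄dX ℝ

lemma coeff_mul_four (g : ℝ⟦X⟧) (n : ℕ) : coeff (R := ℝ) n (g * 4) = 4 * coeff (R := ℝ) n g := by
  rw [mul_comm, ← map_ofNat (C (R := ℝ)) 4, coeff_C_mul]

lemma e0 (r : ℕ) : coeff (R := ℝ) r A = aR r := coeff_mk r aR

lemma e1 (r : ℕ) : coeff (R := ℝ) r (δ A) = aR (r+1) * ((r:ℝ)+1) := by
  simp [coeff_derivative, A]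

lemma e2 (r : ℕ) : coeff (R := ℝ) r (δ (δ A)) = aR (r+2) * ((r:ℝ)+1) * ((r:ℝ)+2) := by
  simp [coeff_derivative, A]; ring

lemma hA : X * (δ (δ A) * 4) + δ A * 4 + A = X * (X * (δ (δ A) * 4)) + X * (δ A * 4) := by
  ext n
  rcases n with _ | n
  · simp only [map_add, coeff_zero_X_mul, coeff_mul_four, e0, e1]
    rw [aR_succ 0, aR_zero]
    norm_num
  rcases n with _ | m
  · have ha1 : aR 1 = -(1/4) := by rw [show (1:ℕ) = 0+1 from rfl, aR_succ 0, aR_zero]; norm_num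
    have ha2 : aR 2 = -(3/64) := by have h := aR_succ 1; rw [ha1] at h; norm_num at h; exact h
    simp only [map_add, coeff_succ_X_mul, coeff_zero_X_mul, coeff_mul_four, e0, e1, e2]
    norm_num [ha1, ha2]
  · simp only [map_add, coeff_succ_X_mul, coeff_mul_four, e0, e1, e2]
    have h3 := aR_succ (m+2)
    push_cast at h3 ⊢
    norm_num at h3 ⊢
    rw [h3]
    have h1 : ((m:ℝ)+2) + 1 ≠ 0 := by positivity
    field_simp
    ring

lemma d4 : δ (4:ℝ⟦X⟧) = 0 := by rw [← map_ofNat (C (R := ℝ)) 4, derivative_C]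
lemma d3 : δ (3:ℝ⟦X⟧) = 0 := by rw [← map_ofNat (C (R := ℝ)) 3, derivative_C]
lemma d6 : δ (6:ℝ⟦X⟧) = 0 := by rw [← map_ofNat (C (R := ℝ)) 6, derivative_C]
lemma d18 : δ (18:ℝ⟦X⟧) = 0 := by rw [← map_ofNat (C (R := ℝ)) 18, derivative_C]

lemma bigODE :
    (16*X^4 - 48*X^5 + 48*X^6 - 16*X^7) * δ (δ (δ (δ (A^3))))
    + (96*X^3 - 288*X^4 + 288*X^5 - 96*X^6) * δ (δ (δ (A^3)))
    + (112*X^2 - 296*X^3 + 256*X^4 - 72*X^5) * δ (δ (A^3))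
    + (16*X + 32*X^2 - 72*X^3 + 24*X^4) * δ (A^3)
    + (12*X + 21*X^2 - 9*X^3) * A^3 = 0 := by
  have h1 := congrArg δ hA
  simp only [map_add, Derivation.leibniz, smul_eq_mul, derivative_X, d4, d3, d6, d18, mul_zero,
    zero_add, add_zero, mul_one, one_mul] at h1
  have h2 := congrArg δ h1
  simp only [map_add, Derivation.leibniz, smul_eq_mul, derivative_X, d4, d3, d6, d18, mul_zero,
    zero_add, add_zero, mul_one, one_mul] at h2
  have eA1 : δ (A^3) = 3*(A*A*δ A) := by
    simp only [pow_succ, pow_zero, one_mul, Derivation.leibniz, smul_eq_mul]; ring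
  have eA2 : δ (3*(A*A*δ A)) = 6*(A*(δ A*δ A)) + 3*(A*A*δ (δ A)) := by
    simp only [Derivation.leibniz, smul_eq_mul, d4, d3, d6, d18, mul_zero, zero_add, add_zero]; ring
  have eA3 : δ (6*(A*(δ A*δ A)) + 3*(A*A*δ (δ A))) =
      6*(δ A*(δ A*δ A)) + 18*(A*(δ A*δ (δ A))) + 3*(A*A*δ (δ (δ A))) := by
    simp only [map_add, Derivation.leibniz, smul_eq_mul, d4, d3, d6, d18, mul_zero, zero_add,
      add_zero]; ring
  have eA4 : δ (6*(δ A*(δ A*δ A)) + 18*(A*(δ A*δ (δ A))) + 3*(A*A*δ (δ (δ A)))) =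
      36*(δ A*(δ A*δ (δ A))) + 18*(A*(δ (δ A)*δ (δ A))) + 24*(A*(δ A*δ (δ (δ A))))
      + 3*(A*A*δ (δ (δ (δ A)))) := by
    simp only [map_add, Derivation.leibniz, smul_eq_mul, d4, d3, d6, d18, mul_zero, zero_add,
      add_zero]; ring
  rw [eA1, eA2, eA3, eA4]
  linear_combination
    ((12*X + 21*X^2 - 9*X^3)*(A*A) + (168*X^2 - 240*X^3 + 72*X^4)*(A*δ A)
      + (144*X^3 - 288*X^4 + 144*X^5)*(δ A*δ A)
      + (72*X^3 - 144*X^4 + 72*X^5)*(A*δ (δ A))) * hA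
    + ((36*X^2 - 48*X^3 + 12*X^4)*(A*A) + (96*X^3 - 192*X^4 + 96*X^5)*(A*δ A)) * h1
    + ((12*X^3 - 24*X^4 + 12*X^5)*(A*A)) * h2

lemma bigODE' : X^4 * (C (R := ℝ) (16) * δ (δ (δ (δ ((A^3)))))) + X^5 * (C (R := ℝ) (-48) * δ (δ (δ (δ ((A^3)))))) + X^6 * (C (R := ℝ) (48) * δ (δ (δ (δ ((A^3)))))) + X^7 * (C (R := ℝ) (-16) * δ (δ (δ (δ ((A^3)))))) + X^3 * (C (R := ℝ) (96) * δ (δ (δ ((A^3))))) + X^4 * (C (R := ℝ) (-288) * δ (δ (δ ((A^3))))) + X^5 * (C (R := ℝ) (288) * δ (δ (δ ((A^3))))) + X^6 * (C (R := ℝ) (-96) * δ (δ (δ ((A^3))))) + X^2 * (C (R := ℝ) (112) * δ (δ ((A^3)))) + X^3 * (C (R := ℝ) (-296) * δ (δ ((A^3)))) + X^4 * (C (R := ℝ) (256) * δ (δ ((A^3)))) + X^5 * (C (R := ℝ) (-72) * δ (δ ((A^3)))) + X^1 * (C (R := ℝ) (16) * δ ((A^3))) + X^2 * (C (R := ℝ)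 (32) * δ ((A^3))) + X^3 * (C (R := ℝ) (-72) * δ ((A^3))) + X^4 * (C (R := ℝ) (24) * δ ((A^3))) + X^1 * (C (R := ℝ) (12) * (A^3)) + X^2 * (C (R := ℝ) (21) * (A^3)) + X^3 * (C (R := ℝ) (-9) * (A^3)) = 0 := by
  simp only [map_neg, map_ofNat]
  linear_combination bigODE

lemma brec_big (k : ℕ) :
    16*(((k:ℝ)+6)+1)^4 * coeff (R := ℝ) (k+7) (A^3) =
      (4*(2*((k:ℝ)+6)*(6*((k:ℝ)+6)^3-5*((k:ℝ)+6)-5)-3)) * coeff (R := ℝ) (k+6) (A^3)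
      - (8*((k:ℝ)+6)*(2*((k:ℝ)+6)*(3*(((k:ℝ)+6)-4)*((k:ℝ)+6)+13)-9)+29) * coeff (R := ℝ) (k+5) (A^3)
      + ((2*((k:ℝ)+6)-7)*(2*((k:ℝ)+6)-5)*(2*((k:ℝ)+6)-3)*(2*((k:ℝ)+6)-1)) * coeff (R := ℝ) (k+4) (A^3) := by
  have H := congrArg (coeff (R := ℝ) (k+7)) bigODE'
  have E1 : ∀ g : ℝ⟦X⟧, coeff (R := ℝ) (k+7) (X^1 * g) = coeff (R := ℝ) (k+6) g := fun g => by
    rw [show k+7 = (k+6)+1 from by omega, coeff_X_pow_mul]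
  have E2 : ∀ g : ℝ⟦X⟧, coeff (R := ℝ) (k+7) (X^2 * g) = coeff (R := ℝ) (k+5) g := fun g => by
    rw [show k+7 = (k+5)+2 from by omega, coeff_X_pow_mul]
  have E3 : ∀ g : ℝ⟦X⟧, coeff (R := ℝ) (k+7) (X^3 * g) = coeff (R := ℝ) (k+4) g := fun g => by
    rw [show k+7 = (k+4)+3 from by omega, coeff_X_pow_mul]
  have E4 : ∀ g : ℝ⟦X⟧, coeff (R := ℝ) (k+7) (X^4 * g) = coeff (R := ℝ) (k+3) g := fun g => by
    rw [show k+7 = (k+3)+4 from by omega, coeff_X_pow_mul]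
  have E5 : ∀ g : ℝ⟦X⟧, coeff (R := ℝ) (k+7) (X^5 * g) = coeff (R := ℝ) (k+2) g := fun g => by
    rw [show k+7 = (k+2)+5 from by omega, coeff_X_pow_mul]
  have E6 : ∀ g : ℝ⟦X⟧, coeff (R := ℝ) (k+7) (X^6 * g) = coeff (R := ℝ) (k+1) g := fun g => by
    rw [show k+7 = (k+1)+6 from by omega, coeff_X_pow_mul]
  have E7 : ∀ g : ℝ⟦X⟧, coeff (R := ℝ) (k+7) (X^7 * g) = coeff (R := ℝ) (k+0) g := fun g => by
    rw [show k+7 = (k+0)+7 from by omega, coeff_X_pow_mul]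
  simp only [map_add, E1, E2, E3, E4, E5, E6, E7, coeff_C_mul, map_zero] at H
  simp only [coeff_derivative] at H
  push_cast at H
  simp only [add_assoc, Nat.reduceAdd] at H
  linear_combination H

lemma ha0 : aR 0 = 1 := aR_zero

lemma ha1 : aR 1 = -(1/4) := by
  have h := aR_succ 0
  norm_num [ha0] at h
  exact h

lemma ha2 : aR 2 = -(3/64) := by
  have h := aR_succ 1
  norm_num [ha1] at h
  exact h

lemma ha3 : aR 3 = -(5/256) := by
  have h := aR_succ 2
  norm_num [ha2] at h
  exact h

lemma ha4 : aR 4 = -(175/16384) := by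
  have h := aR_succ 3
  norm_num [ha3] at h
  exact h

lemma ha5 : aR 5 = -(441/65536) := by
  have h := aR_succ 4
  norm_num [ha4] at h
  exact h

lemma ha6 : aR 6 = -(4851/1048576) := by
  have h := aR_succ 5
  norm_num [ha5] at h
  exact h

lemma hbb0 : coeff (R := ℝ) 0 (A^3) = 1 := by
  rw [show (A:ℝ⟦X⟧)^3 = A*A*A from by ring]
  norm_num [coeff_mul, Finset.Nat.sum_antidiagonal_eq_sum_range_succ_mk, Finset.sum_range_succ, A,
    ha0, ha1, ha2, ha3, ha4, ha5, ha6]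

lemma hbb1 : coeff (R := ℝ) 1 (A^3) = -(3/4) := by
  rw [show (A:ℝ⟦X⟧)^3 = A*A*A from by ring]
  norm_num [coeff_mul, Finset.Nat.sum_antidiagonal_eq_sum_range_succ_mk, Finset.sum_range_succ, A,
    ha0, ha1, ha2, ha3, ha4, ha5, ha6]

lemma hbb2 : coeff (R := ℝ) 2 (A^3) = 3/64 := by
  rw [show (A:ℝ⟦X⟧)^3 = A*A*A from by ring]
  norm_num [coeff_mul, Finset.Nat.sum_antidiagonal_eq_sum_range_succ_mk, Finset.sum_range_succ, A,
    ha0, ha1, ha2, ha3, ha4, ha5, ha6]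

lemma hbb3 : coeff (R := ℝ) 3 (A^3) = -(1/256) := by
  rw [show (A:ℝ⟦X⟧)^3 = A*A*A from by ring]
  norm_num [coeff_mul, Finset.Nat.sum_antidiagonal_eq_sum_range_succ_mk, Finset.sum_range_succ, A,
    ha0, ha1, ha2, ha3, ha4, ha5, ha6]

lemma hbb4 : coeff (R := ℝ) 4 (A^3) = -(81/16384) := by
  rw [show (A:ℝ⟦X⟧)^3 = A*A*A from by ring]
  norm_num [coeff_mul, Finset.Nat.sum_antidiagonal_eq_sum_range_succ_mk, Finset.sum_range_succ, A,
    ha0, ha1, ha2, ha3, ha4, ha5, ha6]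

lemma hbb5 : coeff (R := ℝ) 5 (A^3) = -(261/65536) := by
  rw [show (A:ℝ⟦X⟧)^3 = A*A*A from by ring]
  norm_num [coeff_mul, Finset.Nat.sum_antidiagonal_eq_sum_range_succ_mk, Finset.sum_range_succ, A,
    ha0, ha1, ha2, ha3, ha4, ha5, ha6]

lemma hbb6 : coeff (R := ℝ) 6 (A^3) = -(3267/1048576) := by
  rw [show (A:ℝ⟦X⟧)^3 = A*A*A from by ring]
  norm_num [coeff_mul, Finset.Nat.sum_antidiagonal_eq_sum_range_succ_mk, Finset.sum_range_succ, A,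
    ha0, ha1, ha2, ha3, ha4, ha5, ha6]

lemma brec (n : ℕ) (hn : 2 ≤ n) :
    coeff (R := ℝ) (n+1) (A^3) =
      ((2*(n:ℝ)*(6*(n:ℝ)^3-5*(n:ℝ)-5)-3)/(4*((n:ℝ)+1)^4)) * coeff (R := ℝ) n (A^3)
      - ((8*(n:ℝ)*(2*(n:ℝ)*(3*((n:ℝ)-4)*(n:ℝ)+13)-9)+29)/(16*((n:ℝ)+1)^4)) * coeff (R := ℝ) (n-1) (A^3)
      + ((2*(n:ℝ)-7)*(2*(n:ℝ)-5)*(2*(n:ℝ)-3)*(2*(n:ℝ)-1)/(16*((n:ℝ)+1)^4)) * coeff (R := ℝ) (n-2) (A^3) := by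
  rcases (by omega : n = 2 ∨ n = 3 ∨ n = 4 ∨ n = 5 ∨ 6 ≤ n) with h|h|h|h|h6
  on_goal 5 => obtain ⟨k, hk⟩ := Nat.exists_eq_add_of_le h6
  on_goal 5 => have h : n = k + 6 := by omega
  · subst h; norm_num [hbb0, hbb1, hbb2, hbb3]
  · subst h; norm_num [hbb1, hbb2, hbb3, hbb4]
  · subst h; norm_num [hbb2, hbb3, hbb4, hbb5]
  · subst h; norm_num [hbb3, hbb4, hbb5, hbb6]
  · subst h
    have H := brec_big k
    have h4 : ((k:ℝ)+6+1)^4 ≠ 0 := by positivity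
    rw [show k+6-1 = k+5 from rfl, show k+6-2 = k+4 from rfl, show k+6+1 = k+7 from rfl]
    push_cast
    field_simp
    linear_combination 4 * H

lemma v_eq (v : ℕ → ℝ)
    (hv0 : v 0 = 1)
    (hv1 : v 1 = -(3 / 4))
    (hv2 : v 2 = 3 / 64)
    (hrec : ∀ n : ℕ, 2 ≤ n →
      v (n + 1) =
        ((2 * (n : ℝ) * (6 * (n : ℝ) ^ 3 - 5 * (n : ℝ) - 5) - 3) /
          (4 * ((n : ℝ) + 1) ^ 4)) * v n
        - ((8 * (n : ℝ) * (2 * (n : ℝ) * (3 * ((n : ℝ) - 4) * (n : ℝ) + 13) - 9) + 29) /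
          (16 * ((n : ℝ) + 1) ^ 4)) * v (n - 1)
        + ((2 * (n : ℝ) - 7) * (2 * (n : ℝ) - 5) * (2 * (n : ℝ) - 3) * (2 * (n : ℝ) - 1) /
          (16 * ((n : ℝ) + 1) ^ 4)) * v (n - 2)) :
    ∀ n, v n = coeff (R := ℝ) n (A^3) := by
  intro n
  induction n using Nat.strong_induction_on with
  | _ n ih =>
    rcases (by omega : n = 0 ∨ n = 1 ∨ n = 2 ∨ 3 ≤ n) with h|h|h|h3
    on_goal 4 => obtain ⟨m, hm⟩ := Nat.exists_eq_add_of_le h3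
    on_goal 4 => have h : n = m + 3 := by omega
    · subst h; rw [hv0, hbb0]
    · subst h; rw [hv1, hbb1]
    · subst h; rw [hv2, hbb2]
    · subst h
      have h2 : 2 ≤ m+2 := by omega
      show v ((m+2)+1) = coeff (R := ℝ) ((m+2)+1) (A^3)
      rw [hrec (m+2) h2, brec (m+2) h2]
      rw [show m+2-1 = m+1 from rfl, show m+2-2 = m from rfl]
      rw [ih (m+2) (by omega), ih (m+1) (by omega), ih m (by omega)]

lemma habs : ∀ k, |aR k| ≤ 1 := by
  intro k
  induction k with
  | zero => rw [aR_zero]; norm_num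
  | succ k ih =>
    rw [aR_succ k, abs_mul]
    have h0 : (0:ℝ) ≤ (k:ℝ) := Nat.cast_nonneg k
    have hq : |(2*(k:ℝ) - 1) * (2*(k:ℝ) + 1) / (4 * ((k:ℝ)+1)^2)| ≤ 1 := by
      rw [abs_div, abs_of_pos (by positivity : (0:ℝ) < 4 * ((k:ℝ)+1)^2), div_le_one (by positivity)]
      rw [abs_le]
      constructor <;> nlinarith
    calc |(2*(k:ℝ) - 1) * (2*(k:ℝ) + 1) / (4 * ((k:ℝ)+1)^2)| * |aR k|
        ≤ 1 * 1 := by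
          apply mul_le_mul hq ih (abs_nonneg _) (by norm_num)
      _ = 1 := by norm_num

end Aux

theorem cubed_elliptic_E_recurrence
    (z : ℂ) (hz : ‖z‖ < 1)
    (v : ℕ → ℝ)
    (hv0 : v 0 = 1)
    (hv1 : v 1 = -(3 / 4))
    (hv2 : v 2 = 3 / 64)
    (hrec : ∀ n : ℕ, 2 ≤ n →
      v (n + 1) =
        ((2 * (n : ℝ) * (6 * (n : ℝ) ^ 3 - 5 * (n : ℝ) - 5) - 3) /
          (4 * ((n : ℝ) + 1) ^ 4)) * v n
        - ((8 * (n : ℝ) * (2 * (n : ℝ) * (3 * ((n : ℝ) - 4) * (n : ℝ) + 13) - 9) + 29) /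
          (16 * ((n : ℝ) + 1) ^ 4)) * v (n - 1)
        + ((2 * (n : ℝ) - 7) * (2 * (n : ℝ) - 5) * (2 * (n : ℝ) - 3) * (2 * (n : ℝ) - 1) /
          (16 * ((n : ℝ) + 1) ^ 4)) * v (n - 2)) :
    (hyperF (-(1 / 2)) (1 / 2) 1 (z ^ 2)) ^ 3 = ∑' n : ℕ, (v n : ℂ) * z ^ (2 * n) := by
  classical
  have hpoch : ∀ (k : ℕ) (r : ℝ),
      (ascPochhammer ℂ k).eval ((r:ℂ)) = (((ascPochhammer ℝ k).eval r : ℝ) : ℂ) := by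
    intro k r
    rw [← ascPochhammer_map (Complex.ofRealHom) k, Polynomial.eval_map,
      ← Complex.ofRealHom_eq_coe r, Polynomial.eval₂_at_apply,
      Complex.ofRealHom_eq_coe]
  -- hyperF as a power series with real coefficients aR
  have hF : hyperF (-(1 / 2)) (1 / 2) 1 (z ^ 2) = ∑' k : ℕ, (aR k : ℂ) * (z^2)^k := by
    unfold hyperF
    refine tsum_congr fun k => ?_
    have h1 := hpoch k (-(1/2))
    have h2 := hpoch k (1/2)
    push_cast at h1 h2
    rw [h1, h2, ascPochhammer_eval_one]
    have hfac : ((k ! : ℝ)) ≠ 0 := by positivity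
    simp only [aR]
    push_cast
    ring
  -- norm of z^2
  have hr0 : (0:ℝ) ≤ ‖(z:ℂ)^2‖ := norm_nonneg _
  have hr1 : ‖(z:ℂ)^2‖ < 1 := by
    rw [norm_pow]
    calc ‖z‖^2 < 1^2 := by
          apply pow_lt_pow_left₀ hz (norm_nonneg z)
          norm_num
      _ = 1 := one_pow 2
  -- summability of the basic series
  have hb : ∀ k : ℕ, ‖(aR k : ℂ) * (z^2)^k‖ ≤ ‖(z:ℂ)^2‖^k := by
    intro k
    rw [norm_mul, norm_pow]
    calc ‖((aR k : ℝ) : ℂ)‖ * ‖(z:ℂ)^2‖^k ≤ 1 * ‖(z:ℂ)^2‖^k := by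
          apply mul_le_mul_of_nonneg_right _ (by positivity)
          rw [Complex.norm_real, Real.norm_eq_abs]
          exact habs k
      _ = ‖(z:ℂ)^2‖^k := one_mul _
  have hsum1 : Summable (fun k => ‖(aR k : ℂ) * (z^2)^k‖) :=
    Summable.of_nonneg_of_le (fun k => norm_nonneg _) hb
      (summable_geometric_of_lt_one hr0 hr1)
  -- convolution square coefficients
  set c2 : ℕ → ℝ := fun n => ∑ kl ∈ Finset.HasAntidiagonal.antidiagonal n, aR kl.1 * aR kl.2 with hc2
  have hC1 : (∑' k : ℕ, (aR k : ℂ) * (z^2)^k) * (∑' k : ℕ, (aR k : ℂ) * (z^2)^k)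
      = ∑' n : ℕ, (c2 n : ℂ) * (z^2)^n := by
    rw [tsum_mul_tsum_eq_tsum_sum_antidiagonal_of_summable_norm hsum1 hsum1]
    refine tsum_congr fun n => ?_
    rw [hc2]
    push_cast
    rw [Finset.sum_mul]
    refine Finset.sum_congr rfl fun kl hkl => ?_
    have hkl' : kl.1 + kl.2 = n := Finset.HasAntidiagonal.mem_antidiagonal.mp hkl
    rw [← hkl', pow_add]
    ring
  have hc2b : ∀ n, |c2 n| ≤ (n:ℝ) + 1 := by
    intro n
    calc |c2 n| ≤ ∑ kl ∈ Finset.HasAntidiagonal.antidiagonal n, |aR kl.1 * aR kl.2| :=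
          Finset.abs_sum_le_sum_abs _ _
      _ ≤ ∑ _kl ∈ Finset.HasAntidiagonal.antidiagonal n, 1 := by
          refine Finset.sum_le_sum fun kl _ => ?_
          rw [abs_mul]
          calc |aR kl.1| * |aR kl.2| ≤ 1 * 1 :=
                mul_le_mul (habs _) (habs _) (abs_nonneg _) (by norm_num)
            _ = 1 := by norm_num
      _ = (n:ℝ) + 1 := by
          rw [Finset.sum_const, Finset.Nat.card_antidiagonal]
          push_cast; ring
  have hsum2 : Summable (fun n => ‖(c2 n : ℂ) * (z^2)^n‖) := by
    have hg : Summable (fun n : ℕ => ((n:ℝ) + 1) * ‖(z:ℂ)^2‖^n) := by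
      have t1 : Summable (fun n : ℕ => (n:ℝ)^1 * ‖(z:ℂ)^2‖^n) := by
        apply summable_pow_mul_geometric_of_norm_lt_one
        rw [Real.norm_eq_abs, abs_of_nonneg hr0]
        exact hr1
      have t2 : Summable (fun n : ℕ => ‖(z:ℂ)^2‖^n) := summable_geometric_of_lt_one hr0 hr1
      have := t1.add t2
      refine this.congr fun n => ?_
      push_cast; ring
    refine Summable.of_nonneg_of_le (fun n => norm_nonneg _) (fun n => ?_) hg
    rw [norm_mul, norm_pow]
    apply mul_le_mul_of_nonneg_right _ (by positivity)
    rw [Complex.norm_real, Real.norm_eq_abs]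
    exact hc2b n
  set c3 : ℕ → ℝ := fun n => ∑ kl ∈ Finset.HasAntidiagonal.antidiagonal n, c2 kl.1 * aR kl.2 with hc3
  have hC2 : (∑' n : ℕ, (c2 n : ℂ) * (z^2)^n) * (∑' k : ℕ, (aR k : ℂ) * (z^2)^k)
      = ∑' n : ℕ, (c3 n : ℂ) * (z^2)^n := by
    rw [tsum_mul_tsum_eq_tsum_sum_antidiagonal_of_summable_norm hsum2 hsum1]
    refine tsum_congr fun n => ?_
    rw [hc3]
    push_cast
    rw [Finset.sum_mul]
    refine Finset.sum_congr rfl fun kl hkl => ?_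
    have hkl' : kl.1 + kl.2 = n := Finset.HasAntidiagonal.mem_antidiagonal.mp hkl
    rw [← hkl', pow_add]
    ring
  have hc3eq : ∀ n, c3 n = PowerSeries.coeff (R := ℝ) n (A^3) := by
    intro n
    rw [show (A:PowerSeries ℝ)^3 = A*A*A from by ring, hc3, hc2]
    simp [PowerSeries.coeff_mul, A, Finset.sum_mul]
  have hveq := v_eq v hv0 hv1 hv2 hrec
  rw [hF, show ∀ w : ℂ, w^3 = w*w*w from fun w => by ring, hC1, hC2]
  refine tsum_congr fun n => ?_
  rw [hc3eq n, ← hveq n, pow_mul]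
end

section
/- (Clausen's formula.) Let a, b, x be complex numbers with |x| < 1, such that a + b + 1/2 is not zero or a negative integer and 2a + 2b is not zero or a negative integer. Then F(a, b; a+b+1/2; x)² = ∑_{n=0}^∞ ((2a)_n (2b)_n (a+b)_n / (n! (a+b+1/2)_n (2a+2b)_n)) x^n, i.e., the square of F(a,b;a+b+1/2;x) equals the generalized hypergeometric series ₃F₂(2a, 2b, a+b; a+b+1/2, 2a+2b; x). -/
open scoped Nat
open Filter Finset Polynomial Topology

namespace Clausen

noncomputable def u (a b c : ℂ) (k : ℕ) : ℂ :=
  (ascPochhammer ℂ k).eval a * (ascPochhammer ℂ k).eval b /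
    ((ascPochhammer ℂ k).eval c * (k ! : ℂ))

lemma poch_ne_zero {c : ℂ} (hc : ∀ k : ℕ, c + (k : ℂ) ≠ 0) (m : ℕ) :
    (ascPochhammer ℂ m).eval c ≠ 0 := by
  induction m with
  | zero => simp
  | succ m ih =>
    rw [ascPochhammer_succ_eval]
    exact mul_ne_zero ih (hc m)

lemma fact_ne_zero (m : ℕ) : ((m ! : ℕ) : ℂ) ≠ 0 := by
  exact_mod_cast Nat.cast_ne_zero.mpr m.factorial_ne_zero

lemma tendsto_inv_aux (d : ℂ) : Tendsto (fun k : ℕ => (d + (k : ℂ))⁻¹) atTop (𝓝 0) := by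
  rw [tendsto_zero_iff_norm_tendsto_zero]
  simp only [norm_inv]
  apply Tendsto.inv_tendsto_atTop
  apply tendsto_atTop_mono (fun k : ℕ => by
    have h1 : ((k : ℝ)) ≤ ‖d + (k : ℂ)‖ + ‖d‖ := by
      calc ((k : ℝ)) = ‖((k : ℂ))‖ := by simp
        _ = ‖(d + (k : ℂ)) - d‖ := by congr 1; ring
        _ ≤ ‖d + (k : ℂ)‖ + ‖d‖ := norm_sub_le _ _
    show (k : ℝ) - ‖d‖ ≤ ‖d + (k : ℂ)‖
    linarith)
  exact tendsto_atTop_add_const_right _ _ tendsto_natCast_atTop_atTop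

lemma u_succ (a b c : ℂ) (hc : ∀ k : ℕ, c + (k : ℂ) ≠ 0) (k : ℕ) :
    u a b c (k + 1) = u a b c k * ((a + k) * (b + k) / ((c + k) * ((k : ℂ) + 1))) := by
  unfold u
  rw [ascPochhammer_succ_eval, ascPochhammer_succ_eval, ascPochhammer_succ_eval,
    Nat.factorial_succ, Nat.cast_mul]
  have h1 := poch_ne_zero hc k
  have h2 := hc k
  have h3 := fact_ne_zero k
  have h4 : ((k : ℂ) + 1) ≠ 0 := Nat.cast_add_one_ne_zero k
  push_cast
  field_simp

lemma summable_norm_aux (a b c x : ℂ) (hc : ∀ k : ℕ, c + (k : ℂ) ≠ 0)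
    (hx : ‖x‖ < 1) : Summable fun k : ℕ => ‖u a b c k * x ^ k‖ := by
  set r : ℝ := (1 + ‖x‖) / 2 with hr
  have hr1 : r < 1 := by rw [hr]; linarith
  have hxr : ‖x‖ < r := by rw [hr]; linarith
  have hw : Tendsto (fun k : ℕ => ((a + k) * (b + k) / ((c + k) * ((k : ℂ) + 1)) * x))
      atTop (𝓝 x) := by
    have heq : ∀ k : ℕ, (a + k) * (b + k) / ((c + k) * ((k : ℂ) + 1)) * x =
        (1 + (a - 1) * ((1 : ℂ) + k)⁻¹) * (1 + (b - c) * (c + k)⁻¹) * x := by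
      intro k
      have h2 := hc k
      have h4 : ((1 : ℂ) + k) ≠ 0 := by
        simpa [add_comm] using Nat.cast_add_one_ne_zero (R := ℂ) k
      have e1 : (1 + (a - 1) * ((1 : ℂ) + k)⁻¹) = (a + k) * ((1 : ℂ) + k)⁻¹ := by
        field_simp
        ring
      have e2 : (1 + (b - c) * (c + k)⁻¹) = (b + k) * (c + k)⁻¹ := by
        field_simp
        ring
      rw [e1, e2, div_eq_mul_inv, mul_inv]
      ring
    simp only [heq]
    have l1 : Tendsto (fun k : ℕ => (1 + (a - 1) * ((1 : ℂ) + k)⁻¹)) atTop (𝓝 1) := by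
      have := ((tendsto_inv_aux 1).const_mul (a - 1)).const_add (1 : ℂ)
      simpa using this
    have l2 : Tendsto (fun k : ℕ => (1 + (b - c) * (c + k)⁻¹)) atTop (𝓝 1) := by
      have := ((tendsto_inv_aux c).const_mul (b - c)).const_add (1 : ℂ)
      simpa using this
    have := (l1.mul l2).mul (tendsto_const_nhds : Tendsto (fun _ : ℕ => x) atTop (𝓝 x))
    simpa using this
  have hnorm : Tendsto (fun k : ℕ => ‖(a + k) * (b + k) / ((c + k) * ((k : ℂ) + 1)) * x‖)
      atTop (𝓝 ‖x‖) := hw.norm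
  have hev : ∀ᶠ k : ℕ in atTop, ‖(a + k) * (b + k) / ((c + k) * ((k : ℂ) + 1)) * x‖ < r :=
    Filter.Tendsto.eventually_lt_const hxr hnorm
  apply summable_of_ratio_norm_eventually_le hr1
  filter_upwards [hev] with k hk
  have key : u a b c (k + 1) * x ^ (k + 1) =
      (u a b c k * x ^ k) * ((a + k) * (b + k) / ((c + k) * ((k : ℂ) + 1)) * x) := by
    rw [u_succ a b c hc k, pow_succ]; ring
  rw [norm_norm, norm_norm, key, norm_mul]
  have := norm_nonneg (u a b c k * x ^ k)
  nlinarith [hk, norm_nonneg ((a + k) * (b + k) / ((c + k) * ((k : ℂ) + 1)) * x)]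


noncomputable def qq (a b : ℂ) (n i : ℕ) : ℂ :=
  (i : ℂ) * (2 * (i:ℂ)^2 - 3*((n:ℂ)+1)*(i:ℂ) + 1 - (a+b) - 2*(a+b)^2
    + 3/2*(n:ℂ) - 3*(n:ℂ)*(a+b))

noncomputable def gP (a b : ℂ) (n i j : ℕ) : ℂ :=
  u a b (a+b+1/2) i * u a b (a+b+1/2) j * qq a b n i

lemma gP_zero (a b : ℂ) (n m : ℕ) : gP a b n 0 m = 0 := by
  simp [gP, qq]

lemma u_succ' (a b c : ℂ) (hc : ∀ k : ℕ, c + (k : ℂ) ≠ 0) (k : ℕ) :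
    ((c + k) * ((k : ℂ) + 1)) * u a b c (k + 1) = u a b c k * ((a + k) * (b + k)) := by
  have hD : (c + k) * ((k : ℂ) + 1) ≠ 0 := mul_ne_zero (hc k) (Nat.cast_add_one_ne_zero k)
  have hck := hc k
  rw [u_succ a b c hc k]
  field_simp

set_option maxHeartbeats 1000000 in
lemma key (a b : ℂ) (h1 : ∀ k : ℕ, a + b + 1/2 + (k:ℂ) ≠ 0) (i j n : ℕ) (hn : i + j = n) :
    (((n:ℂ)+1) * ((a+b+1/2) + (n:ℂ)) * (2*a+2*b+(n:ℂ))) *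
      (u a b (a+b+1/2) i * u a b (a+b+1/2) (j+1))
    - ((2*a+(n:ℂ)) * (2*b+(n:ℂ)) * ((a+b)+(n:ℂ))) *
      (u a b (a+b+1/2) i * u a b (a+b+1/2) j)
    = gP a b n (i+1) j - gP a b n i (j+1) := by
  subst hn
  have hD1 : ((a+b+1/2) + (i:ℂ)) * ((i:ℂ)+1) ≠ 0 :=
    mul_ne_zero (h1 i) (Nat.cast_add_one_ne_zero i)
  have hD2 : ((a+b+1/2) + (j:ℂ)) * ((j:ℂ)+1) ≠ 0 :=
    mul_ne_zero (h1 j) (Nat.cast_add_one_ne_zero j)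
  have s1 := u_succ' a b (a+b+1/2) h1 j
  have s2 := u_succ' a b (a+b+1/2) h1 i
  have hpoly : (((a+b+1/2) + (i:ℂ)) * ((i:ℂ)+1)) *
        ((((i:ℂ)+(j:ℂ)+1) * ((a+b+1/2) + ((i:ℂ)+(j:ℂ))) * (2*a+2*b+((i:ℂ)+(j:ℂ)))) *
          ((a+(j:ℂ))*(b+(j:ℂ))))
      - ((2*a+((i:ℂ)+(j:ℂ))) * (2*b+((i:ℂ)+(j:ℂ))) * ((a+b)+((i:ℂ)+(j:ℂ)))) *
        ((((a+b+1/2) + (i:ℂ)) * ((i:ℂ)+1)) * (((a+b+1/2) + (j:ℂ)) * ((j:ℂ)+1)))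
      = (((a+b+1/2) + (j:ℂ)) * ((j:ℂ)+1)) * ((a+(i:ℂ))*(b+(i:ℂ))) * qq a b (i+j) (i+1)
        - (((a+b+1/2) + (i:ℂ)) * ((i:ℂ)+1)) * ((a+(j:ℂ))*(b+(j:ℂ))) * qq a b (i+j) i := by
    unfold qq
    push_cast
    ring
  unfold gP
  push_cast
  apply mul_left_cancel₀ (mul_ne_zero hD1 hD2)
  linear_combination (u a b (a+b+1/2) i * u a b (a+b+1/2) j) * hpoly
    + ((((a+b+1/2) + (i:ℂ)) * ((i:ℂ)+1)) *
        ((((i:ℂ)+(j:ℂ)+1) * ((a+b+1/2) + ((i:ℂ)+(j:ℂ))) * (2*a+2*b+((i:ℂ)+(j:ℂ))))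
          + qq a b (i+j) i) * u a b (a+b+1/2) i) * s1
    - ((((a+b+1/2) + (j:ℂ)) * ((j:ℂ)+1)) * qq a b (i+j) (i+1) * u a b (a+b+1/2) j) * s2

lemma edge (a b : ℂ) (n : ℕ) :
    gP a b n (n+1) 0 = -((((n:ℂ))+1) * ((a+b+1/2)+(n:ℂ)) * (2*a+2*b+(n:ℂ))) *
      (u a b (a+b+1/2) (n+1) * u a b (a+b+1/2) 0) := by
  have hq : qq a b n (n+1) = -((((n:ℂ))+1) * ((a+b+1/2)+(n:ℂ)) * (2*a+2*b+(n:ℂ))) := by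
    unfold qq
    push_cast
    ring
  unfold gP
  rw [hq]
  ring


lemma u_zero (a b c : ℂ) : u a b c 0 = 1 := by simp [u]

noncomputable def S (a b : ℂ) (n : ℕ) : ℂ :=
  ∑ k ∈ Finset.range (n+1), u a b (a+b+1/2) k * u a b (a+b+1/2) (n - k)

noncomputable def Qc (a b : ℂ) (n : ℕ) : ℂ :=
  (ascPochhammer ℂ n).eval (2 * a) * (ascPochhammer ℂ n).eval (2 * b)
      * (ascPochhammer ℂ n).eval (a + b) /
    ((n ! : ℂ) * (ascPochhammer ℂ n).eval (a + b + 1 / 2)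
      * (ascPochhammer ℂ n).eval (2 * a + 2 * b))

lemma S_rec (a b : ℂ) (h1 : ∀ k : ℕ, a + b + 1/2 + (k:ℂ) ≠ 0) (n : ℕ) :
    (((n:ℂ)+1) * ((a+b+1/2) + (n:ℂ)) * (2*a+2*b+(n:ℂ))) * S a b (n+1)
    = ((2*a+(n:ℂ)) * (2*b+(n:ℂ)) * ((a+b)+(n:ℂ))) * S a b n := by
  rw [← sub_eq_zero]
  have e1 : S a b (n+1) = (∑ k ∈ Finset.range (n+1),
      u a b (a+b+1/2) k * u a b (a+b+1/2) (n+1-k)) + u a b (a+b+1/2) (n+1) * u a b (a+b+1/2) 0 := by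
    unfold S
    rw [Finset.sum_range_succ]
    simp
  rw [e1, mul_add]
  unfold S
  rw [Finset.mul_sum, Finset.mul_sum, add_sub_right_comm, ← Finset.sum_sub_distrib]
  have hterm : ∀ k ∈ Finset.range (n+1),
      (((n:ℂ)+1) * ((a+b+1/2) + (n:ℂ)) * (2*a+2*b+(n:ℂ))) *
        (u a b (a+b+1/2) k * u a b (a+b+1/2) (n+1-k))
      - ((2*a+(n:ℂ)) * (2*b+(n:ℂ)) * ((a+b)+(n:ℂ))) *
        (u a b (a+b+1/2) k * u a b (a+b+1/2) (n-k))
      = gP a b n (k+1) (n-k) - gP a b n k (n+1-k) := by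
    intro k hk
    have hk' : k ≤ n := Nat.lt_succ_iff.mp (Finset.mem_range.mp hk)
    have hsub : n + 1 - k = (n - k) + 1 := by omega
    rw [hsub]
    exact key a b h1 k (n-k) n (Nat.add_sub_cancel' hk')
  rw [Finset.sum_congr rfl hterm]
  have htel : ∑ k ∈ Finset.range (n+1), (gP a b n (k+1) (n-k) - gP a b n k (n+1-k))
      = gP a b n (n+1) 0 - gP a b n 0 (n+1) := by
    have h := Finset.sum_range_sub (f := fun k => gP a b n k (n+1-k)) (n+1)
    simp only [Nat.succ_sub_succ] at h
    simpa using h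
  rw [htel, gP_zero, edge]
  ring

lemma Q_rec (a b : ℂ) (h1 : ∀ k : ℕ, a + b + 1/2 + (k:ℂ) ≠ 0)
    (h2 : ∀ k : ℕ, 2*a + 2*b + (k:ℂ) ≠ 0) (n : ℕ) :
    (((n:ℂ)+1) * ((a+b+1/2) + (n:ℂ)) * (2*a+2*b+(n:ℂ))) * Qc a b (n+1)
    = ((2*a+(n:ℂ)) * (2*b+(n:ℂ)) * ((a+b)+(n:ℂ))) * Qc a b n := by
  unfold Qc
  simp only [ascPochhammer_succ_eval, Nat.factorial_succ, Nat.cast_mul]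
  have hc := poch_ne_zero h1 n
  have hs := poch_ne_zero h2 n
  have hf := fact_ne_zero n
  have hcn := h1 n
  have hsn := h2 n
  have hn1 : ((n:ℂ)+1) ≠ 0 := Nat.cast_add_one_ne_zero n
  have hD1 : ((((n:ℕ)+1 : ℕ) : ℂ) * (n ! : ℂ)) *
      ((ascPochhammer ℂ n).eval (a+b+1/2) * ((a+b+1/2) + (n:ℂ))) *
      ((ascPochhammer ℂ n).eval (2*a+2*b) * ((2*a+2*b) + (n:ℂ))) ≠ 0 := by
    push_cast
    exact mul_ne_zero (mul_ne_zero (mul_ne_zero hn1 hf) (mul_ne_zero hc hcn))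
      (mul_ne_zero hs hsn)
  have hD2 : ((n ! : ℂ)) * (ascPochhammer ℂ n).eval (a+b+1/2) *
      (ascPochhammer ℂ n).eval (2*a+2*b) ≠ 0 :=
    mul_ne_zero (mul_ne_zero hf hc) hs
  rw [← mul_div_assoc, ← mul_div_assoc, div_eq_div_iff hD1 hD2]
  push_cast
  ring

lemma S_eq_Q (a b : ℂ) (h1 : ∀ k : ℕ, a + b + 1/2 + (k:ℂ) ≠ 0)
    (h2 : ∀ k : ℕ, 2*a + 2*b + (k:ℂ) ≠ 0) (n : ℕ) : S a b n = Qc a b n := by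
  induction n with
  | zero => simp [S, Qc, u]
  | succ n ih =>
    have hA : (((n:ℂ)+1) * ((a+b+1/2) + (n:ℂ)) * (2*a+2*b+(n:ℂ))) ≠ 0 :=
      mul_ne_zero (mul_ne_zero (Nat.cast_add_one_ne_zero n) (h1 n)) (h2 n)
    apply mul_left_cancel₀ hA
    rw [S_rec a b h1 n, ih, Q_rec a b h1 h2 n]

end Clausen

/-- Clausen's formula: the square of `F(a,b;a+b+1/2;x)` is the generalized
hypergeometric series `₃F₂(2a, 2b, a+b; a+b+1/2, 2a+2b; x)`. -/
theorem clausen_formula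
    (a b x : ℂ) (hx : ‖x‖ < 1)
    (h1 : ∀ k : ℕ, a + b + 1 / 2 + (k : ℂ) ≠ 0)
    (h2 : ∀ k : ℕ, 2 * a + 2 * b + (k : ℂ) ≠ 0) :
    (hyperF a b (a + b + 1 / 2) x) ^ 2 =
      ∑' n : ℕ, ((ascPochhammer ℂ n).eval (2 * a) * (ascPochhammer ℂ n).eval (2 * b)
          * (ascPochhammer ℂ n).eval (a + b) /
        ((n ! : ℂ) * (ascPochhammer ℂ n).eval (a + b + 1 / 2)
          * (ascPochhammer ℂ n).eval (2 * a + 2 * b))) * x ^ n := by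
  have hxn : ‖x‖ < 1 := hx
  have hsum := Clausen.summable_norm_aux a b (a+b+1/2) x h1 hxn
  have hF : hyperF a b (a + b + 1/2) x = ∑' k : ℕ, Clausen.u a b (a+b+1/2) k * x ^ k := rfl
  rw [sq, hF, tsum_mul_tsum_eq_tsum_sum_antidiagonal_of_summable_norm hsum hsum]
  apply tsum_congr
  intro n
  calc ∑ kl ∈ Finset.HasAntidiagonal.antidiagonal n,
        (Clausen.u a b (a+b+1/2) kl.1 * x ^ kl.1) * (Clausen.u a b (a+b+1/2) kl.2 * x ^ kl.2)
      = ∑ kl ∈ Finset.HasAntidiagonal.antidiagonal n,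
        (Clausen.u a b (a+b+1/2) kl.1 * Clausen.u a b (a+b+1/2) kl.2) * x ^ n := by
        refine Finset.sum_congr rfl fun p hp => ?_
        have hpn : p.1 + p.2 = n := Finset.HasAntidiagonal.mem_antidiagonal.mp hp
        rw [← hpn, pow_add]
        ring
    _ = (∑ kl ∈ Finset.HasAntidiagonal.antidiagonal n,
          Clausen.u a b (a+b+1/2) kl.1 * Clausen.u a b (a+b+1/2) kl.2) * x ^ n := by
        rw [← Finset.sum_mul]
    _ = Clausen.S a b n * x ^ n := by
        rw [Finset.Nat.sum_antidiagonal_eq_sum_range_succ_mk]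
        rfl
    _ = Clausen.Qc a b n * x ^ n := by rw [Clausen.S_eq_Q a b h1 h2 n]
    _ = _ := rfl
end
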